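/- Let Γ be a 3-edge connected metric graph with canonical model (G₀, l₀), and let D ∈ W¹₃(Γ) be a divisor of degree 3 and rank ≥ 1. Then for every vertex x ∈ V(G₀) there is a unique admissible representative of D with respect to x: a unique effective divisor D_x linearly equivalent to D of the form D_x = x + x₁ + x₂ with x₁, x₂ not both lying in the interior of the same edge of G₀. Moreover, any two distinct admissible representatives of D have disjoint supports. -/

import Mathlib

open scoped Classical

/-!
Combinatorial models of metric graphs: a finite (multi-)graph together with a
positive length for each edge.  A metric graph is determined by such a model;
its canonical model is the (unique) model with all valences at least `3`.
-/

structure MetricGraphModel : Type 1 where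
  V : Type
  E : Type
  fV : Fintype V
  fE : Fintype E
  dV : DecidableEq V
  dE : DecidableEq E
  src : E → V
  tgt : E → V
  len : E → ℝ
  len_pos : ∀ e, 0 < len e

attribute [instance] MetricGraphModel.fV MetricGraphModel.fE
attribute [instance] MetricGraphModel.dV MetricGraphModel.dE

namespace MetricGraphModel

/-- An edge is incident to a vertex. -/
def Incident (Γ : MetricGraphModel) (e : Γ.E) (v : Γ.V) : Prop :=
  Γ.src e = v ∨ Γ.tgt e = v

/-- Incidence multiplicity (a loop counts twice). -/
def incid (Γ : MetricGraphModel) (e : Γ.E) (v : Γ.V) : ℕ :=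
  (if Γ.src e = v then 1 else 0) + (if Γ.tgt e = v then 1 else 0)

/-- The valence of a vertex. -/
def valence (Γ : MetricGraphModel) (v : Γ.V) : ℕ := ∑ e : Γ.E, Γ.incid e v

def dSrc (Γ : MetricGraphModel) (x : Γ.E × Bool) : Γ.V :=
  if x.2 then Γ.src x.1 else Γ.tgt x.1

def dTgt (Γ : MetricGraphModel) (x : Γ.E × Bool) : Γ.V :=
  if x.2 then Γ.tgt x.1 else Γ.src x.1

/-- Walks, given as lists of oriented edges. -/
def IsWalk (Γ : MetricGraphModel) : List (Γ.E × Bool) → Γ.V → Γ.V → Prop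
  | [], u, v => u = v
  | x :: xs, u, v => Γ.dSrc x = u ∧ IsWalk Γ xs (Γ.dTgt x) v

def Connected (Γ : MetricGraphModel) : Prop :=
  Nonempty Γ.V ∧ ∀ u v : Γ.V, ∃ L, IsWalk Γ L u v

/-- Removing any set of at most `2` edges leaves the graph connected. -/
def ThreeEdgeConnected (Γ : MetricGraphModel) : Prop :=
  ∀ S : Finset Γ.E, S.card ≤ 2 → ∀ u v : Γ.V,
    ∃ L, IsWalk Γ L u v ∧ ∀ x ∈ L, x.1 ∉ S

def Loopless (Γ : MetricGraphModel) : Prop := ∀ e : Γ.E, Γ.src e ≠ Γ.tgt e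

/-- A canonical model: connected, with all valences at least `3`. -/
def IsCanonical (Γ : MetricGraphModel) : Prop :=
  Γ.Connected ∧ ∀ v : Γ.V, 3 ≤ Γ.valence v

/-- A (model of a) metric tree. -/
def IsTreeModel (Γ : MetricGraphModel) : Prop :=
  Γ.Connected ∧ Fintype.card Γ.E + 1 = Fintype.card Γ.V

/-- Points of the associated metric graph: vertices together with interior
points of edges (parametrised by their distance from the source). -/
abbrev Pt (Γ : MetricGraphModel) : Type :=
  Γ.V ⊕ Σ e : Γ.E, {t : ℝ // 0 < t ∧ t < Γ.len e}

end MetricGraphModel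

open MetricGraphModel

/-- The (canonical) loopless model: insert a vertex at the midpoint of every loop. -/
noncomputable def looplessModel (Γ : MetricGraphModel) : MetricGraphModel where
  V := Γ.V ⊕ {e : Γ.E // Γ.src e = Γ.tgt e}
  E := {e : Γ.E // Γ.src e ≠ Γ.tgt e} ⊕ ({e : Γ.E // Γ.src e = Γ.tgt e} × Bool)
  fV := inferInstance
  fE := inferInstance
  dV := inferInstance
  dE := inferInstance
  src := fun x => match x with
    | Sum.inl e => Sum.inl (Γ.src e.1)
    | Sum.inr p => Sum.inl (Γ.src p.1.1)
  tgt := fun x => match x with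
    | Sum.inl e => Sum.inl (Γ.tgt e.1)
    | Sum.inr p => Sum.inr p.1
  len := fun x => match x with
    | Sum.inl e => Γ.len e.1
    | Sum.inr p => Γ.len p.1.1 / 2
  len_pos := by
    rintro (e | p)
    · exact Γ.len_pos e.1
    · have h := Γ.len_pos p.1.1
      show 0 < Γ.len p.1.1 / 2
      linarith

/-- The metric subgraph obtained by removing all loops. -/
noncomputable def deloop (Γ : MetricGraphModel) : MetricGraphModel where
  V := Γ.V
  E := {e : Γ.E // Γ.src e ≠ Γ.tgt e}
  fV := inferInstance
  fE := inferInstance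
  dV := inferInstance
  dE := inferInstance
  src := fun e => Γ.src e.1
  tgt := fun e => Γ.tgt e.1
  len := fun e => Γ.len e.1
  len_pos := fun e => Γ.len_pos e.1

namespace MetricGraphModel

/-! ### Divisors and rational functions -/

abbrev Divisor (Γ : MetricGraphModel) : Type := Γ.Pt → ℤ

noncomputable def divDegree {Γ : MetricGraphModel} (D : Divisor Γ) : ℤ := finsum D

def DivEffective {Γ : MetricGraphModel} (D : Divisor Γ) : Prop := ∀ p, 0 ≤ D p

def DivFinSupp {Γ : MetricGraphModel} (D : Divisor Γ) : Prop :=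
  (Function.support D).Finite

noncomputable def unitDiv (Γ : MetricGraphModel) (p : Γ.Pt) : Divisor Γ :=
  fun q => if q = p then 1 else 0

/-- `f` is continuous piecewise linear with integer slopes on `[0, L]`. -/
def PLInt (f : ℝ → ℝ) (L : ℝ) : Prop :=
  ∃ n : ℕ, ∃ t : Fin (n + 1) → ℝ, t 0 = 0 ∧ t (Fin.last n) = L ∧ StrictMono t ∧
    ∀ i : Fin n, ∃ m : ℤ, ∀ s ∈ Set.Icc (t i.castSucc) (t i.succ),
      f s = f (t i.castSucc) + (m : ℝ) * (s - t i.castSucc)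

/-- The (integer) outgoing slope of `f` to the right of `t0`. -/
noncomputable def slopeR (f : ℝ → ℝ) (t0 : ℝ) : ℤ :=
  if h : ∃ m : ℤ, ∃ ε : ℝ, 0 < ε ∧ ∀ s ∈ Set.Icc t0 (t0 + ε),
      f s = f t0 + (m : ℝ) * (s - t0)
  then h.choose else 0

/-- The (integer) outgoing slope of `f` to the left of `t0`. -/
noncomputable def slopeL (f : ℝ → ℝ) (t0 : ℝ) : ℤ :=
  if h : ∃ m : ℤ, ∃ ε : ℝ, 0 < ε ∧ ∀ s ∈ Set.Icc (t0 - ε) t0,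
      f s = f t0 + (m : ℝ) * (t0 - s)
  then h.choose else 0

/-- A rational function: continuous, piecewise linear with integer slopes. -/
structure RationalFunction (Γ : MetricGraphModel) where
  vVal : Γ.V → ℝ
  eFun : Γ.E → ℝ → ℝ
  pl : ∀ e, PLInt (eFun e) (Γ.len e)
  srcVal : ∀ e, eFun e 0 = vVal (Γ.src e)
  tgtVal : ∀ e, eFun e (Γ.len e) = vVal (Γ.tgt e)

/-- The principal divisor of a rational function: the sum of the outgoing
slopes at every point. -/
noncomputable def ratDiv {Γ : MetricGraphModel} (f : RationalFunction Γ) : Divisor Γ :=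
  fun p => match p with
  | Sum.inl v => ∑ e : Γ.E,
      ((if Γ.src e = v then slopeR (f.eFun e) 0 else 0) +
       (if Γ.tgt e = v then slopeL (f.eFun e) (Γ.len e) else 0))
  | Sum.inr q => slopeR (f.eFun q.1) q.2.1 + slopeL (f.eFun q.1) q.2.1

/-- Evaluation of a rational function at a point of the metric graph. -/
def ratEval {Γ : MetricGraphModel} (f : RationalFunction Γ) : Γ.Pt → ℝ
  | Sum.inl v => f.vVal v
  | Sum.inr q => f.eFun q.1 q.2.1

/-- Linear equivalence of divisors. -/
def LinEquiv (Γ : MetricGraphModel) (D D' : Divisor Γ) : Prop :=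
  ∃ f : RationalFunction Γ, ∀ p, D p = D' p + ratDiv f p

/-- The Baker–Norine rank of `D` is at least `k`. -/
def RankGE (Γ : MetricGraphModel) (D : Divisor Γ) (k : ℕ) : Prop :=
  ∀ A : Divisor Γ, DivEffective A → DivFinSupp A → divDegree A = (k : ℤ) →
    ∃ B : Divisor Γ, DivEffective B ∧ DivFinSupp B ∧
      LinEquiv Γ (fun p => D p - A p) B

/-- `W¹₃(Γ) ≠ ∅`: some divisor of degree `3` has rank at least `1`. -/
def DivisoriallyTrigonal (Γ : MetricGraphModel) : Prop :=
  ∃ D : Divisor Γ, DivFinSupp D ∧ divDegree D = 3 ∧ RankGE Γ D 1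

end MetricGraphModel

/-! ### Harmonic morphisms of metric graphs -/

/-- An indexed morphism of metric graph models.  An edge is either mapped onto
an edge (with an integer stretching index `mu`) or contracted to a vertex. -/
structure MGMorphism (Γ Δ : MetricGraphModel) where
  vMap : Γ.V → Δ.V
  eMap : Γ.E → Δ.E ⊕ Δ.V
  mu : Γ.E → ℕ
  mu_zero : ∀ e, mu e = 0 ↔ ∃ v', eMap e = Sum.inr v'
  contract_ok : ∀ e v', eMap e = Sum.inr v' →
    vMap (Γ.src e) = v' ∧ vMap (Γ.tgt e) = v'
  edge_ok : ∀ e e', eMap e = Sum.inl e' →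
    ((vMap (Γ.src e) = Δ.src e' ∧ vMap (Γ.tgt e) = Δ.tgt e') ∨
     (vMap (Γ.src e) = Δ.tgt e' ∧ vMap (Γ.tgt e) = Δ.src e'))
  len_ok : ∀ e e', eMap e = Sum.inl e' → (mu e : ℝ) * Γ.len e = Δ.len e'

namespace MGMorphism

variable {Γ Δ : MetricGraphModel}

/-- The local sum `m_φ(v)` computed along a fixed edge `e'` at `φ(v)`. -/
noncomputable def locDeg (φ : MGMorphism Γ Δ) (v : Γ.V) (e' : Δ.E) : ℕ :=
  ∑ e : Γ.E, if φ.eMap e = Sum.inl e' then φ.mu e * Γ.incid e v else 0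

def Harmonic (φ : MGMorphism Γ Δ) : Prop :=
  ∀ (v : Γ.V) (e₁ e₂ : Δ.E),
    Δ.Incident e₁ (φ.vMap v) → Δ.Incident e₂ (φ.vMap v) →
      locDeg φ v e₁ = locDeg φ v e₂

def Nondegenerate (φ : MGMorphism Γ Δ) : Prop :=
  ∀ v : Γ.V, ∃ e' : Δ.E, Δ.Incident e' (φ.vMap v) ∧ 1 ≤ locDeg φ v e'

def HasDegree (φ : MGMorphism Γ Δ) (d : ℕ) : Prop :=
  ∀ e' : Δ.E, (∑ e : Γ.E, if φ.eMap e = Sum.inl e' then φ.mu e else 0) = d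

/-- The horizontal multiplicity `m_φ(v)` at a vertex. -/
noncomputable def mVal (φ : MGMorphism Γ Δ) (v : Γ.V) : ℕ :=
  (Finset.univ.filter fun e' : Δ.E => Δ.Incident e' (φ.vMap v)).sup (locDeg φ v)

end MGMorphism

/-! ### Isomorphisms, subdivisions and tropical modifications -/

def sameEndsMap (Γ Δ : MetricGraphModel) (f : Γ.V → Δ.V) (e : Γ.E) (e' : Δ.E) : Prop :=
  (f (Γ.src e) = Δ.src e' ∧ f (Γ.tgt e) = Δ.tgt e') ∨
  (f (Γ.src e) = Δ.tgt e' ∧ f (Γ.tgt e) = Δ.src e')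

structure MGMIso (Γ Δ : MetricGraphModel) where
  vEquiv : Γ.V ≃ Δ.V
  eEquiv : Γ.E ≃ Δ.E
  ends : ∀ e, sameEndsMap Γ Δ (fun v => vEquiv v) e (eEquiv e)
  len_eq : ∀ e, Δ.len (eEquiv e) = Γ.len e

/-- Deletion of a leaf (a valence-one vertex together with its edge). -/
def LeafDeletion (Δ Δ' : MetricGraphModel) : Prop :=
  ∃ (v₀ : Δ.V) (e₀ : Δ.E), Δ.valence v₀ = 1 ∧ Δ.Incident e₀ v₀ ∧
    ∃ (fv : Δ'.V ≃ {v : Δ.V // v ≠ v₀}) (fe : Δ'.E ≃ {e : Δ.E // e ≠ e₀}),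
      (∀ e : Δ'.E, sameEndsMap Δ' Δ (fun v => (fv v).1) e (fe e).1) ∧
      ∀ e : Δ'.E, Δ.len (fe e).1 = Δ'.len e

/-- Suppression of a valence-two vertex, merging its two edges and adding
their lengths. -/
def SeriesReduction (Δ Δ' : MetricGraphModel) : Prop :=
  ∃ (v₀ : Δ.V) (e₁ e₂ : Δ.E) (u₁ u₂ : Δ.V),
    e₁ ≠ e₂ ∧ Δ.valence v₀ = 2 ∧ u₁ ≠ v₀ ∧ u₂ ≠ v₀ ∧
    ({Δ.src e₁, Δ.tgt e₁} : Set Δ.V) = {v₀, u₁} ∧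
    ({Δ.src e₂, Δ.tgt e₂} : Set Δ.V) = {v₀, u₂} ∧
    ∃ (fv : Δ'.V ≃ {v : Δ.V // v ≠ v₀}) (ebar : Δ'.E)
      (fe : {e : Δ'.E // e ≠ ebar} ≃ {e : Δ.E // e ≠ e₁ ∧ e ≠ e₂}),
      Δ'.len ebar = Δ.len e₁ + Δ.len e₂ ∧
      ({(fv (Δ'.src ebar)).1, (fv (Δ'.tgt ebar)).1} : Set Δ.V) = {u₁, u₂} ∧
      (∀ e : {e : Δ'.E // e ≠ ebar},
        sameEndsMap Δ' Δ (fun v => (fv v).1) e.1 (fe e).1) ∧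
      ∀ e : {e : Δ'.E // e ≠ ebar}, Δ.len (fe e).1 = Δ'.len e.1

def ReductionStep (Δ Δ' : MetricGraphModel) : Prop :=
  LeafDeletion Δ Δ' ∨ SeriesReduction Δ Δ' ∨ Nonempty (MGMIso Δ Δ')

/-- `Δ` reduces to `Γ` by deleting leaves and suppressing valence-two
vertices.  When `Γ` is a canonical model, this says exactly that the metric
graph of `Δ` is a tropical modification of the metric graph of `Γ`. -/
def Reduces (Δ Γ : MetricGraphModel) : Prop :=
  Relation.ReflTransGen ReductionStep Δ Γ

def IsTropicalModificationOf (Δ Γ : MetricGraphModel) : Prop := Reduces Δ Γ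

def ModelStep (Δ Δ' : MetricGraphModel) : Prop :=
  SeriesReduction Δ Δ' ∨ Nonempty (MGMIso Δ Δ')

/-- `Δ` and `Γ` are models of the same metric graph (no trees added). -/
def SameMetricGraph (Δ Γ : MetricGraphModel) : Prop :=
  Relation.ReflTransGen ModelStep Δ Γ

/-- `Γ` is trigonal: a tropical modification of `Γ` admits a non-degenerate
harmonic morphism of degree `3` onto a metric tree. -/
def Trigonal (Γ : MetricGraphModel) : Prop :=
  ∃ Δ T : MetricGraphModel, IsTropicalModificationOf Δ Γ ∧ T.IsTreeModel ∧
    ∃ φ : MGMorphism Δ T,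
      MGMorphism.Harmonic φ ∧ MGMorphism.Nondegenerate φ ∧ MGMorphism.HasDegree φ 3

/-- `Γ` is strictly trigonal: `Γ` itself (i.e. some model of the same metric
graph) admits a non-degenerate harmonic morphism of degree `3` onto a metric
tree. -/
def StrictlyTrigonal (Γ : MetricGraphModel) : Prop :=
  ∃ Δ T : MetricGraphModel, SameMetricGraph Δ Γ ∧ T.IsTreeModel ∧
    ∃ φ : MGMorphism Δ T,
      MGMorphism.Harmonic φ ∧ MGMorphism.Nondegenerate φ ∧ MGMorphism.HasDegree φ 3

/-! ### Embeddings up to subdivision (for tropical modifications of morphisms) -/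

structure SubEmbed (G Δ : MetricGraphModel) where
  v : G.V → Δ.V
  inj : Function.Injective v
  path : G.E → List (Δ.E × Bool)
  ne : ∀ e, path e ≠ []
  walk : ∀ e, MetricGraphModel.IsWalk Δ (path e) (v (G.src e)) (v (G.tgt e))
  len_sum : ∀ e, ((path e).map fun x => Δ.len x.1).sum = G.len e

/-! ### Pullback of points along a harmonic morphism -/

/-- `φ` maps the point `p` of `Γ` to the point `t` of `Δ`. -/
def MapsToPt {Γ Δ : MetricGraphModel} (φ : MGMorphism Γ Δ) : Γ.Pt → Δ.Pt → Prop
  | Sum.inl v, Sum.inl t => φ.vMap v = t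
  | Sum.inl _, Sum.inr _ => False
  | Sum.inr q, Sum.inl t => φ.eMap q.1 = Sum.inr t
  | Sum.inr q, Sum.inr r =>
      φ.eMap q.1 = Sum.inl r.1 ∧
      ((φ.vMap (Γ.src q.1) = Δ.src r.1 ∧ (r.2.1 : ℝ) = (φ.mu q.1 : ℝ) * (q.2.1 : ℝ)) ∨
       (φ.vMap (Γ.src q.1) = Δ.tgt r.1 ∧
         (r.2.1 : ℝ) = Δ.len r.1 - (φ.mu q.1 : ℝ) * (q.2.1 : ℝ)))

/-- Horizontal multiplicity of a point. -/
noncomputable def hmult {Γ Δ : MetricGraphModel} (φ : MGMorphism Γ Δ) : Γ.Pt → ℕ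
  | Sum.inl v => MGMorphism.mVal φ v
  | Sum.inr q => φ.mu q.1

/-- The pullback divisor `φ*(t)` of a point `t`. -/
noncomputable def pullbackDiv {Γ Δ : MetricGraphModel} (φ : MGMorphism Γ Δ)
    (t : Δ.Pt) : MetricGraphModel.Divisor Γ :=
  fun p => if MapsToPt φ p t then (hmult φ p : ℤ) else 0

/-! ### Points on edges, admissible representatives, consecutive divisors -/

open MetricGraphModel

/-- `p` is an interior point of the edge `e`. -/
def interiorOf (Γ : MetricGraphModel) (e : Γ.E) (p : Γ.Pt) : Prop :=
  ∃ q : {t : ℝ // 0 < t ∧ t < Γ.len e}, p = Sum.inr ⟨e, q⟩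

def SameEdgeInterior (Γ : MetricGraphModel) (p q : Γ.Pt) : Prop :=
  ∃ e : Γ.E, interiorOf Γ e p ∧ interiorOf Γ e q

/-- `Dx` is the admissible representative of `D` with respect to the vertex
`x`: it is linearly equivalent to `D`, of the form `x + x₁ + x₂`, and `x₁, x₂`
do not both lie in the interior of one edge. -/
def AdmissibleRep (Γ : MetricGraphModel) (D : Divisor Γ) (x : Γ.V)
    (Dx : Divisor Γ) : Prop :=
  LinEquiv Γ D Dx ∧
  ∃ p q : Γ.Pt,
    Dx = (fun z => unitDiv Γ (Sum.inl x) z + unitDiv Γ p z + unitDiv Γ q z) ∧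
    ¬ SameEdgeInterior Γ p q

/-- `p` lies on the (closed) edge `e` at distance `s` from its source. -/
def LiesOn (Γ : MetricGraphModel) (e : Γ.E) (p : Γ.Pt) (s : ℝ) : Prop :=
  (p = Sum.inl (Γ.src e) ∧ s = 0) ∨ (p = Sum.inl (Γ.tgt e) ∧ s = Γ.len e) ∨
  (∃ h : 0 < s ∧ s < Γ.len e, p = Sum.inr ⟨e, ⟨s, h⟩⟩)

/-- Vertices of the refinement `G_D`: vertices of `G₀` together with all
support points of admissible representatives of `D`. -/
def SpecialPt (Γ : MetricGraphModel) (D : Divisor Γ) (p : Γ.Pt) : Prop :=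
  (∃ v : Γ.V, p = Sum.inl v) ∨
  ∃ (x : Γ.V) (Dx : Divisor Γ), AdmissibleRep Γ D x Dx ∧ Dx p ≠ 0

/-- An edge of the refinement `G_D` joining the supports of `Dx` and `Dy`:
a segment of an edge of `Γ` between a point of `Supp Dx` and a point of
`Supp Dy` containing no vertex of `G_D` in its interior. -/
def ConnSeg (Γ : MetricGraphModel) (D Dx Dy : Divisor Γ) (e : Γ.E) (s t : ℝ) : Prop :=
  s < t ∧ ∃ p q : Γ.Pt, LiesOn Γ e p s ∧ LiesOn Γ e q t ∧
    ((Dx p ≠ 0 ∧ Dy q ≠ 0) ∨ (Dy p ≠ 0 ∧ Dx q ≠ 0)) ∧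
    ∀ r, s < r → r < t → ∀ z, LiesOn Γ e z r → ¬ SpecialPt Γ D z

/-- Two admissible representatives are consecutive. -/
def Consecutive (Γ : MetricGraphModel) (D Dx Dy : Divisor Γ) : Prop :=
  Dx ≠ Dy ∧ ∃ e s t, ConnSeg Γ D Dx Dy e s t

/-- The open segment of `e` between parameters `s` and `t`, as a set of points. -/
def segSet (Γ : MetricGraphModel) (e : Γ.E) (s t : ℝ) : Set Γ.Pt :=
  {z | ∃ r, s < r ∧ r < t ∧ LiesOn Γ e z r}

/-- Two points can be joined inside one edge avoiding the removed set `R`. -/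
def AvoidAdj (Γ : MetricGraphModel) (R : Set Γ.Pt) (p q : Γ.Pt) : Prop :=
  ∃ (e : Γ.E) (s t : ℝ), s ≤ t ∧
    ((LiesOn Γ e p s ∧ LiesOn Γ e q t) ∨ (LiesOn Γ e q s ∧ LiesOn Γ e p t)) ∧
    ∀ r, s < r → r < t → ∀ z, LiesOn Γ e z r → z ∉ R

/-- The complement of `R` in the metric graph is connected. -/
def ComplementConnected (Γ : MetricGraphModel) (R : Set Γ.Pt) : Prop :=
  ∀ p q : Γ.Pt, p ∉ R → q ∉ R →
    Relation.ReflTransGen (fun a b => a ∉ R ∧ b ∉ R ∧ AvoidAdj Γ R a b) p q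

/-! ### Minimizing/maximizing sets of a rational function -/

def minSet {Γ : MetricGraphModel} (f : RationalFunction Γ) : Set Γ.Pt :=
  {p | ∀ q, ratEval f p ≤ ratEval f q}

def maxSet {Γ : MetricGraphModel} (f : RationalFunction Γ) : Set Γ.Pt :=
  {p | ∀ q, ratEval f q ≤ ratEval f p}

/-- `p` is a boundary point of `A`: it belongs to `A` and there are points of
the complement arbitrarily close to it along some edge. -/
def InBoundary (Γ : MetricGraphModel) (A : Set Γ.Pt) (p : Γ.Pt) : Prop :=
  p ∈ A ∧ ∃ (e : Γ.E) (s : ℝ), LiesOn Γ e p s ∧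
    ∀ ε : ℝ, 0 < ε → ∃ r z, |r - s| < ε ∧ LiesOn Γ e z r ∧ z ∉ A

/-- There is an edge leaving `A` at `p`, in the direction of `e` at parameter
`s` (increasing if `b = true`, decreasing if `b = false`). -/
def ExitsAt (Γ : MetricGraphModel) (A : Set Γ.Pt) (p : Γ.Pt) (e : Γ.E)
    (s : ℝ) (b : Bool) : Prop :=
  LiesOn Γ e p s ∧
  (b = true → ∃ ε : ℝ, 0 < ε ∧ s + ε ≤ Γ.len e ∧
    ∀ r, s < r → r < s + ε → ∀ z, LiesOn Γ e z r → z ∉ A) ∧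
  (b = false → ∃ ε : ℝ, 0 < ε ∧ 0 ≤ s - ε ∧
    ∀ r, s - ε < r → r < s → ∀ z, LiesOn Γ e z r → z ∉ A)

/-!
Existence: rank at least one gives `D ∼ x + p + q` for points `p, q`.  If `p` and `q` lie
inside one edge, moving them apart at equal speed keeps the class, until one of them reaches a
vertex.

Rigidity: suppose `p + q = p' + q' + div f`, where neither pair lies inside one open edge.  Then
`div f ≤ p + q`, and each direction in which `f` increases away from its minimum contributes to
`div f` at that point.  If no vertex is a minimum of `f`, then `f` increases on both sides of
its minimum within a single edge, which forces `p` and `q` into that edge.  Otherwise at most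
two edges leave the minimum level, so `3`-edge connectivity makes every vertex a minimum.  The
same argument for `-f` makes every vertex a maximum, so `f` is constant and `p + q = p' + q'`.

Two admissible representatives sharing a point `z` both have the form `z + r₁ + r₂` with
`r₁, r₂` not inside one edge, so rigidity makes them equal; representatives with respect to the
same `x` share the point `x`.
-/

open Set

namespace MetricGraphModel

section Slopes

variable {F G : ℝ → ℝ} {t₀ : ℝ} {m m' : ℤ}

def HasRightSlope (F : ℝ → ℝ) (t₀ : ℝ) (m : ℤ) : Prop :=
  ∃ ε : ℝ, 0 < ε ∧ ∀ s ∈ Icc t₀ (t₀ + ε), F s = F t₀ + (m : ℝ) * (s - t₀)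

def HasLeftSlope (F : ℝ → ℝ) (t₀ : ℝ) (m : ℤ) : Prop :=
  ∃ ε : ℝ, 0 < ε ∧ ∀ s ∈ Icc (t₀ - ε) t₀, F s = F t₀ + (m : ℝ) * (t₀ - s)

theorem HasRightSlope.unique (h : HasRightSlope F t₀ m) (h' : HasRightSlope F t₀ m') :
    m = m' := by
  obtain ⟨ε, hε, hF⟩ := h
  obtain ⟨ε', hε', hF'⟩ := h'
  set δ := min ε ε'
  have hδ : 0 < δ := lt_min hε hε'
  have h₁ := hF (t₀ + δ) ⟨by linarith, by linarith [min_le_left ε ε']⟩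
  have h₂ := hF' (t₀ + δ) ⟨by linarith, by linarith [min_le_right ε ε']⟩
  exact_mod_cast mul_right_cancel₀ hδ.ne' (by linarith : (m : ℝ) * δ = m' * δ)

theorem HasLeftSlope.unique (h : HasLeftSlope F t₀ m) (h' : HasLeftSlope F t₀ m') :
    m = m' := by
  obtain ⟨ε, hε, hF⟩ := h
  obtain ⟨ε', hε', hF'⟩ := h'
  set δ := min ε ε'
  have hδ : 0 < δ := lt_min hε hε'
  have h₁ := hF (t₀ - δ) ⟨by linarith [min_le_left ε ε'], by linarith⟩
  have h₂ := hF' (t₀ - δ) ⟨by linarith [min_le_right ε ε'], by linarith⟩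
  exact_mod_cast mul_right_cancel₀ hδ.ne' (by linarith : (m : ℝ) * δ = m' * δ)

theorem HasRightSlope.slopeR_eq (h : HasRightSlope F t₀ m) : slopeR F t₀ = m := by
  have hex : ∃ m, HasRightSlope F t₀ m := ⟨m, h⟩
  exact (dif_pos hex).trans (hex.choose_spec.unique h)

theorem HasLeftSlope.slopeL_eq (h : HasLeftSlope F t₀ m) : slopeL F t₀ = m := by
  have hex : ∃ m, HasLeftSlope F t₀ m := ⟨m, h⟩
  exact (dif_pos hex).trans (hex.choose_spec.unique h)

theorem HasRightSlope.congr (h : HasRightSlope G t₀ m) {δ : ℝ} (hδ : 0 < δ)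
    (hFG : EqOn F G (Icc t₀ (t₀ + δ))) : HasRightSlope F t₀ m := by
  obtain ⟨ε, hε, hG⟩ := h
  refine ⟨min ε δ, lt_min hε hδ, fun s hs => ?_⟩
  have hs₁ : s ∈ Icc t₀ (t₀ + ε) := ⟨hs.1, by linarith [hs.2, min_le_left ε δ]⟩
  have hs₂ : s ∈ Icc t₀ (t₀ + δ) := ⟨hs.1, by linarith [hs.2, min_le_right ε δ]⟩
  rw [hFG hs₂, hFG (left_mem_Icc.2 (by linarith)), hG s hs₁]

theorem HasLeftSlope.congr (h : HasLeftSlope G t₀ m) {δ : ℝ} (hδ : 0 < δ)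
    (hFG : EqOn F G (Icc (t₀ - δ) t₀)) : HasLeftSlope F t₀ m := by
  obtain ⟨ε, hε, hG⟩ := h
  refine ⟨min ε δ, lt_min hε hδ, fun s hs => ?_⟩
  have hs₁ : s ∈ Icc (t₀ - ε) t₀ := ⟨by linarith [hs.1, min_le_left ε δ], hs.2⟩
  have hs₂ : s ∈ Icc (t₀ - δ) t₀ := ⟨by linarith [hs.1, min_le_right ε δ], hs.2⟩
  rw [hFG hs₂, hFG (right_mem_Icc.2 (by linarith)), hG s hs₁]

theorem hasRightSlope_const (c : ℝ) (t₀ : ℝ) : HasRightSlope (fun _ => c) t₀ 0 :=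
  ⟨1, one_pos, fun _ _ => by simp⟩

theorem hasLeftSlope_const (c : ℝ) (t₀ : ℝ) : HasLeftSlope (fun _ => c) t₀ 0 :=
  ⟨1, one_pos, fun _ _ => by simp⟩

theorem HasRightSlope.add (hF : HasRightSlope F t₀ m) (hG : HasRightSlope G t₀ m') :
    HasRightSlope (F + G) t₀ (m + m') := by
  obtain ⟨ε, hε, hF⟩ := hF
  obtain ⟨ε', hε', hG⟩ := hG
  refine ⟨min ε ε', lt_min hε hε', fun s hs => ?_⟩
  rw [Pi.add_apply, Pi.add_apply,
    hF s ⟨hs.1, by linarith [hs.2, min_le_left ε ε']⟩,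
    hG s ⟨hs.1, by linarith [hs.2, min_le_right ε ε']⟩]
  push_cast; ring

theorem HasLeftSlope.add (hF : HasLeftSlope F t₀ m) (hG : HasLeftSlope G t₀ m') :
    HasLeftSlope (F + G) t₀ (m + m') := by
  obtain ⟨ε, hε, hF⟩ := hF
  obtain ⟨ε', hε', hG⟩ := hG
  refine ⟨min ε ε', lt_min hε hε', fun s hs => ?_⟩
  rw [Pi.add_apply, Pi.add_apply,
    hF s ⟨by linarith [hs.1, min_le_left ε ε'], hs.2⟩,
    hG s ⟨by linarith [hs.1, min_le_right ε ε'], hs.2⟩]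
  push_cast; ring

theorem HasRightSlope.const_mul (h : HasRightSlope F t₀ m) (k : ℤ) :
    HasRightSlope (fun s => (k : ℝ) * F s) t₀ (k * m) := by
  obtain ⟨ε, hε, hF⟩ := h
  exact ⟨ε, hε, fun s hs => by simp only [hF s hs]; push_cast; ring⟩

theorem HasLeftSlope.const_mul (h : HasLeftSlope F t₀ m) (k : ℤ) :
    HasLeftSlope (fun s => (k : ℝ) * F s) t₀ (k * m) := by
  obtain ⟨ε, hε, hF⟩ := h
  exact ⟨ε, hε, fun s hs => by simp only [hF s hs]; push_cast; ring⟩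

theorem HasRightSlope.sum {ι : Type*} (s : Finset ι) {F : ι → ℝ → ℝ} {m : ι → ℤ}
    (h : ∀ i ∈ s, HasRightSlope (F i) t₀ (m i)) :
    HasRightSlope (∑ i ∈ s, F i) t₀ (∑ i ∈ s, m i) := by
  induction s using Finset.induction_on with
  | empty => rw [Finset.sum_empty, Finset.sum_empty]; exact hasRightSlope_const 0 t₀
  | insert i s hi ih =>
    rw [Finset.sum_insert hi, Finset.sum_insert hi]
    exact (h i (Finset.mem_insert_self i s)).add
      (ih fun j hj => h j (Finset.mem_insert_of_mem hj))

theorem HasLeftSlope.sum {ι : Type*} (s : Finset ι) {F : ι → ℝ → ℝ} {m : ι → ℤ}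
    (h : ∀ i ∈ s, HasLeftSlope (F i) t₀ (m i)) :
    HasLeftSlope (∑ i ∈ s, F i) t₀ (∑ i ∈ s, m i) := by
  induction s using Finset.induction_on with
  | empty => rw [Finset.sum_empty, Finset.sum_empty]; exact hasLeftSlope_const 0 t₀
  | insert i s hi ih =>
    rw [Finset.sum_insert hi, Finset.sum_insert hi]
    exact (h i (Finset.mem_insert_self i s)).add
      (ih fun j hj => h j (Finset.mem_insert_of_mem hj))

theorem HasRightSlope.nonneg (h : HasRightSlope F t₀ m) {U : ℝ} (hU : t₀ < U)
    (hle : ∀ s ∈ Icc t₀ U, F t₀ ≤ F s) : 0 ≤ m := by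
  obtain ⟨ε, hε, hF⟩ := h
  set δ := min ε (U - t₀)
  have hδ : 0 < δ := lt_min hε (by linarith)
  have h₁ := hF (t₀ + δ) ⟨by linarith, by linarith [min_le_left ε (U - t₀)]⟩
  have h₂ := hle (t₀ + δ) ⟨by linarith, by linarith [min_le_right ε (U - t₀)]⟩
  have : (0 : ℝ) ≤ m := nonneg_of_mul_nonneg_left (by linarith : (0 : ℝ) ≤ m * δ) hδ
  exact_mod_cast this

theorem HasLeftSlope.nonneg (h : HasLeftSlope F t₀ m) {U : ℝ} (hU : U < t₀)
    (hle : ∀ s ∈ Icc U t₀, F t₀ ≤ F s) : 0 ≤ m := by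
  obtain ⟨ε, hε, hF⟩ := h
  set δ := min ε (t₀ - U)
  have hδ : 0 < δ := lt_min hε (by linarith)
  have h₁ := hF (t₀ - δ) ⟨by linarith [min_le_left ε (t₀ - U)], by linarith⟩
  have h₂ := hle (t₀ - δ) ⟨by linarith [min_le_right ε (t₀ - U)], by linarith⟩
  have : (0 : ℝ) ≤ m := nonneg_of_mul_nonneg_left (by linarith : (0 : ℝ) ≤ m * δ) hδ
  exact_mod_cast this

end Slopes

section Ramps

noncomputable def ramp (a r : ℝ) : ℝ := max (r - a) 0

variable {a r : ℝ}

theorem ramp_of_le (h : a ≤ r) : ramp a r = r - a := max_eq_left (by linarith)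

theorem ramp_of_ge (h : r ≤ a) : ramp a r = 0 := max_eq_right (by linarith)

theorem continuous_ramp (a : ℝ) : Continuous (ramp a) := by
  unfold ramp; fun_prop

theorem hasRightSlope_ramp (a r : ℝ) : HasRightSlope (ramp a) r (if a ≤ r then 1 else 0) := by
  split_ifs with h
  · exact ⟨1, one_pos, fun s hs => by
      rw [ramp_of_le h, ramp_of_le (h.trans hs.1)]; push_cast; ring⟩
  · rw [not_le] at h
    exact ⟨a - r, by linarith, fun s hs => by
      rw [ramp_of_ge h.le, ramp_of_ge (by linarith [hs.2])]; push_cast; ring⟩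

theorem hasLeftSlope_ramp (a r : ℝ) : HasLeftSlope (ramp a) r (if a < r then -1 else 0) := by
  split_ifs with h
  · exact ⟨r - a, by linarith, fun s hs => by
      rw [ramp_of_le h.le, ramp_of_le (by linarith [hs.1])]; push_cast; ring⟩
  · rw [not_lt] at h
    exact ⟨1, one_pos, fun s hs => by
      rw [ramp_of_ge h, ramp_of_ge (hs.2.trans h)]; push_cast; ring⟩

theorem ramp_eq_of_notMem_Ioo {u v : ℝ} (ha : a ∉ Ioo u v) (hr : r ∈ Icc u v) :
    ramp a r = ramp a u + (if a ≤ u then 1 else 0) * (r - u) := by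
  split_ifs with h
  · rw [ramp_of_le h, ramp_of_le (h.trans hr.1)]; ring
  · have : v ≤ a := by by_contra! h'; exact ha ⟨not_le.1 h, h'⟩
    rw [ramp_of_ge (hr.2.trans this), ramp_of_ge (not_le.1 h).le]; ring

variable {ι κ : Type*} [Fintype ι] [Fintype κ]

noncomputable def rampSum (c : ℝ) (k : ι → ℤ) (a : ι → ℝ) (r : ℝ) : ℝ :=
  c + ∑ i, (k i : ℝ) * ramp (a i) r

theorem continuous_rampSum (c : ℝ) (k : ι → ℤ) (a : ι → ℝ) : Continuous (rampSum c k a) := by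
  have := continuous_ramp
  unfold rampSum; fun_prop

theorem rampSum_add_rampSum (c d : ℝ) (k : ι → ℤ) (l : κ → ℤ) (a : ι → ℝ) (b : κ → ℝ) :
    rampSum c k a + rampSum d l b = rampSum (c + d) (Sum.elim k l) (Sum.elim a b) := by
  ext r
  simp only [Pi.add_apply, rampSum, Fintype.sum_sum_type, Sum.elim_inl, Sum.elim_inr]
  ring

theorem neg_rampSum (c : ℝ) (k : ι → ℤ) (a : ι → ℝ) : -rampSum c k a = rampSum (-c) (-k) a := by
  ext r; simp [rampSum]; ring

theorem rampSum_eq (c : ℝ) (k : ι → ℤ) (a : ι → ℝ) :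
    rampSum c k a = (fun _ => c) + ∑ i, fun r => (k i : ℝ) * ramp (a i) r := by
  ext r; simp [rampSum, Finset.sum_apply]

theorem hasRightSlope_rampSum (c : ℝ) (k : ι → ℤ) (a : ι → ℝ) (r : ℝ) :
    HasRightSlope (rampSum c k a) r (∑ i, k i * if a i ≤ r then 1 else 0) := by
  have := (hasRightSlope_const c r).add
    (HasRightSlope.sum Finset.univ fun i _ => (hasRightSlope_ramp (a i) r).const_mul (k i))
  rwa [zero_add, ← rampSum_eq] at this

theorem hasLeftSlope_rampSum (c : ℝ) (k : ι → ℤ) (a : ι → ℝ) (r : ℝ) :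
    HasLeftSlope (rampSum c k a) r (∑ i, k i * if a i < r then -1 else 0) := by
  have := (hasLeftSlope_const c r).add
    (HasLeftSlope.sum Finset.univ fun i _ => (hasLeftSlope_ramp (a i) r).const_mul (k i))
  rwa [zero_add, ← rampSum_eq] at this

end Ramps

section PiecewiseLinear

/-- Every `PLInt` function is a ramp sum on `[0, L]` and conversely; sums, continuity,
one-sided slopes and the degree of principal divisors are all read off this form. -/
def IsRampSumOn (F : ℝ → ℝ) (L : ℝ) : Prop :=
  ∃ (ι : Type) (_ : Fintype ι) (c : ℝ) (k : ι → ℤ) (a : ι → ℝ),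
    (∀ i, a i ∈ Icc 0 L) ∧ EqOn F (rampSum c k a) (Icc 0 L)

variable {F G : ℝ → ℝ} {L : ℝ}

theorem PLInt.len_nonneg (h : PLInt F L) : 0 ≤ L := by
  obtain ⟨n, t, h0, hL, hmono, -⟩ := h
  rw [← h0, ← hL]; exact hmono.monotone (Fin.zero_le _)

/-- On the piece `[t i, t (i+1)]` only the `i`-th difference of ramps varies. -/
theorem sum_ramp_sub_ramp {n : ℕ} {t : Fin (n + 1) → ℝ} (ht : Monotone t) (m : Fin n → ℤ)
    {i : Fin n} {r : ℝ} (hr : r ∈ Icc (t i.castSucc) (t i.succ)) :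
    ∑ j, (m j : ℝ) * (ramp (t j.castSucc) r - ramp (t j.succ) r) =
      ∑ j, (m j : ℝ) * (ramp (t j.castSucc) (t i.castSucc) - ramp (t j.succ) (t i.castSucc))
        + m i * (r - t i.castSucc) := by
  rw [← sub_eq_iff_eq_add', ← Finset.sum_sub_distrib, Finset.sum_eq_single i]
  · rw [ramp_of_le hr.1, ramp_of_ge hr.2, ramp_of_ge le_rfl,
      ramp_of_ge (ht (Fin.castSucc_le_succ i))]
    ring
  · intro j _ hji
    have hj : t j.castSucc ≤ t j.succ := ht (Fin.castSucc_le_succ j)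
    rcases lt_or_gt_of_ne hji with hlt | hgt
    · have hji : t j.succ ≤ t i.castSucc := ht (Fin.succ_le_castSucc_iff.2 hlt)
      rw [ramp_of_le (hj.trans (hji.trans hr.1)), ramp_of_le (hji.trans hr.1),
        ramp_of_le (hj.trans hji), ramp_of_le hji]
      ring
    · have hij : t i.succ ≤ t j.castSucc := ht (Fin.succ_le_castSucc_iff.2 hgt)
      rw [ramp_of_ge (hr.2.trans hij), ramp_of_ge (hr.2.trans (hij.trans hj)),
        ramp_of_ge (hr.1.trans (hr.2.trans hij)),
        ramp_of_ge (hr.1.trans (hr.2.trans (hij.trans hj)))]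
      ring
  · exact fun h => absurd (Finset.mem_univ i) h

theorem PLInt.eqOn_sum_ramp {n : ℕ} {t : Fin (n + 1) → ℝ} (h0 : t 0 = 0) (hmono : StrictMono t)
    {m : Fin n → ℤ}
    (hm : ∀ i : Fin n, ∀ s ∈ Icc (t i.castSucc) (t i.succ),
      F s = F (t i.castSucc) + (m i : ℝ) * (s - t i.castSucc)) :
    EqOn F (fun r => F 0 + ∑ j, (m j : ℝ) * (ramp (t j.castSucc) r - ramp (t j.succ) r))
      (Icc 0 (t (Fin.last n))) := by
  suffices ∀ i : Fin (n + 1), EqOn F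
      (fun r => F 0 + ∑ j, (m j : ℝ) * (ramp (t j.castSucc) r - ramp (t j.succ) r))
      (Icc 0 (t i)) from this _
  have ht0 : ∀ i, 0 ≤ t i := fun i => h0 ▸ hmono.monotone (Fin.zero_le i)
  intro i
  induction i using Fin.induction with
  | zero =>
    intro r hr
    obtain rfl : r = 0 := le_antisymm (h0 ▸ hr.2) hr.1
    simp [ramp_of_ge (ht0 _)]
  | succ i ih =>
    intro r hr
    by_cases hri : r ≤ t i.castSucc
    · exact ih ⟨hr.1, hri⟩
    have hr' : r ∈ Icc (t i.castSucc) (t i.succ) := ⟨(not_le.1 hri).le, hr.2⟩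
    simp only
    rw [hm i r hr', ih ⟨ht0 _, le_rfl⟩, sum_ramp_sub_ramp hmono.monotone m hr']
    ring

theorem PLInt.isRampSumOn (h : PLInt F L) : IsRampSumOn F L := by
  obtain ⟨n, t, h0, hL, hmono, hlin⟩ := h
  choose m hm using hlin
  have ht : ∀ i, t i ∈ Icc 0 L := fun i =>
    ⟨h0 ▸ hmono.monotone (Fin.zero_le i), hL ▸ hmono.monotone (Fin.le_last i)⟩
  refine ⟨Fin n ⊕ Fin n, inferInstance, F 0, Sum.elim m (-m),
    Sum.elim (fun j => t j.castSucc) (fun j => t j.succ), ?_, fun r hr => ?_⟩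
  · rintro (j | j) <;> exact ht _
  · rw [PLInt.eqOn_sum_ramp h0 hmono hm (hL ▸ hr)]
    simp only [rampSum, Fintype.sum_sum_type, Sum.elim_inl, Sum.elim_inr, Pi.neg_apply,
      Int.cast_neg, neg_mul, Finset.sum_neg_distrib, mul_sub, Finset.sum_sub_distrib]
    ring

theorem exists_strictMono_enum (T : Finset ℝ) (h0 : 0 ∈ T) (hL : L ∈ T)
    (hT : ∀ x ∈ T, x ∈ Icc 0 L) :
    ∃ (n : ℕ) (t : Fin (n + 1) → ℝ), t 0 = 0 ∧ t (Fin.last n) = L ∧ StrictMono t ∧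
      ∀ x ∈ T, ∀ j : Fin n, x ∉ Ioo (t j.castSucc) (t j.succ) := by
  have hcard : T.card = T.card - 1 + 1 :=
    (Nat.succ_pred_eq_of_pos (Finset.card_pos.2 ⟨0, h0⟩)).symm
  set τ := T.orderEmbOfFin hcard
  have hmem : ∀ x ∈ T, ∃ i, τ i = x := fun x hx => by
    rw [← Set.mem_range, Finset.range_orderEmbOfFin]; exact hx
  have hτ : ∀ i, τ i ∈ Icc 0 L := fun i => hT _ (Finset.orderEmbOfFin_mem T hcard i)
  refine ⟨_, τ, ?_, ?_, τ.strictMono, ?_⟩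
  · obtain ⟨i, hi⟩ := hmem 0 h0
    exact le_antisymm (hi ▸ τ.monotone (Fin.zero_le i)) (hτ 0).1
  · obtain ⟨i, hi⟩ := hmem L hL
    exact le_antisymm (hτ _).2 (hi ▸ τ.monotone (Fin.le_last i))
  · rintro x hx j ⟨h₁, h₂⟩
    obtain ⟨i, rfl⟩ := hmem x hx
    have h₁ := τ.lt_iff_lt.1 h₁
    have h₂ := τ.lt_iff_lt.1 h₂
    rw [Fin.lt_def] at h₁ h₂
    simp only [Fin.val_castSucc, Fin.val_succ] at h₁ h₂
    omega

theorem IsRampSumOn.plInt (h : IsRampSumOn F L) (hL : 0 ≤ L) : PLInt F L := by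
  obtain ⟨ι, _, c, k, a, ha, hF⟩ := h
  obtain ⟨n, t, h0, htL, hmono, hgap⟩ := exists_strictMono_enum (L := L)
    (insert 0 (insert L (Finset.univ.image a))) (by simp) (by simp) (by
      simp only [Finset.mem_insert, Finset.mem_image, Finset.mem_univ, true_and]
      rintro x (rfl | rfl | ⟨i, rfl⟩)
      exacts [⟨le_rfl, hL⟩, ⟨hL, le_rfl⟩, ha i])
  have ht : ∀ i, t i ∈ Icc 0 L := fun i =>
    ⟨h0 ▸ hmono.monotone (Fin.zero_le i), htL ▸ hmono.monotone (Fin.le_last i)⟩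
  refine ⟨n, t, h0, htL, hmono, fun j => ⟨∑ i, k i * if a i ≤ t j.castSucc then 1 else 0,
    fun s hs => ?_⟩⟩
  have hsub : ∀ r ∈ Icc (t j.castSucc) (t j.succ), r ∈ Icc 0 L := fun r hr =>
    ⟨(ht _).1.trans hr.1, hr.2.trans (ht _).2⟩
  rw [hF (hsub s hs), hF (hsub _ (left_mem_Icc.2 (hmono.monotone (Fin.castSucc_le_succ j))))]
  simp only [rampSum]
  rw [Finset.sum_congr rfl fun i _ => by
    rw [ramp_eq_of_notMem_Ioo (hgap (a i) (by simp) j) hs]]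
  push_cast
  simp only [mul_add, Finset.sum_add_distrib, Finset.sum_mul, mul_assoc]
  ring

theorem isRampSumOn_const (c : ℝ) : IsRampSumOn (fun _ => c) L :=
  ⟨Fin 0, inferInstance, c, ![], ![], finZeroElim, fun r _ => by simp [rampSum]⟩

theorem IsRampSumOn.add (hF : IsRampSumOn F L) (hG : IsRampSumOn G L) :
    IsRampSumOn (F + G) L := by
  obtain ⟨ι, _, c, k, a, ha, hF⟩ := hF
  obtain ⟨κ, _, d, l, b, hb, hG⟩ := hG
  refine ⟨ι ⊕ κ, inferInstance, c + d, Sum.elim k l, Sum.elim a b,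
    by rintro (i | i); exacts [ha i, hb i], fun r hr => ?_⟩
  rw [← rampSum_add_rampSum, Pi.add_apply, Pi.add_apply, hF hr, hG hr]

theorem IsRampSumOn.neg (hF : IsRampSumOn F L) : IsRampSumOn (-F) L := by
  obtain ⟨ι, _, c, k, a, ha, hF⟩ := hF
  exact ⟨ι, inferInstance, -c, -k, a, ha, fun r hr => by
    rw [← neg_rampSum, Pi.neg_apply, Pi.neg_apply, hF hr]⟩

theorem plInt_const (c : ℝ) (hL : 0 ≤ L) : PLInt (fun _ => c) L :=
  (isRampSumOn_const c).plInt hL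

theorem PLInt.add (hF : PLInt F L) (hG : PLInt G L) : PLInt (F + G) L :=
  (hF.isRampSumOn.add hG.isRampSumOn).plInt hF.len_nonneg

theorem PLInt.neg (hF : PLInt F L) : PLInt (-F) L :=
  hF.isRampSumOn.neg.plInt hF.len_nonneg

theorem PLInt.continuousOn (hF : PLInt F L) : ContinuousOn F (Icc 0 L) := by
  obtain ⟨ι, _, c, k, a, -, hF⟩ := hF.isRampSumOn
  exact (continuous_rampSum c k a).continuousOn.congr hF

theorem PLInt.exists_hasRightSlope (h : PLInt F L) {s : ℝ} (hs : s ∈ Ico 0 L) :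
    ∃ m, HasRightSlope F s m := by
  obtain ⟨ι, _, c, k, a, -, hF⟩ := h.isRampSumOn
  exact ⟨_, (hasRightSlope_rampSum c k a s).congr (sub_pos.2 hs.2) fun r hr =>
    hF ⟨hs.1.trans hr.1, by linarith [hr.2]⟩⟩

theorem PLInt.exists_hasLeftSlope (h : PLInt F L) {s : ℝ} (hs : s ∈ Ioc 0 L) :
    ∃ m, HasLeftSlope F s m := by
  obtain ⟨ι, _, c, k, a, -, hF⟩ := h.isRampSumOn
  exact ⟨_, (hasLeftSlope_rampSum c k a s).congr hs.1 fun r hr =>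
    hF ⟨by linarith [hr.1], hr.2.trans hs.2⟩⟩

variable {a b m : ℝ}

theorem PLInt.exists_slopeR_pos (hF : PLInt F L) (ha : 0 ≤ a) (hab : a ≤ b) (hb : b ≤ L)
    (hFa : F a = m) (hge : ∀ r ∈ Icc a b, m ≤ F r) (hFb : m < F b) :
    ∃ s ∈ Ico a b, F s = m ∧ 0 < slopeR F s := by
  have hK : IsCompact (Icc a b ∩ F ⁻¹' {m}) := isCompact_Icc.of_isClosed_subset
    ((hF.continuousOn.mono (Icc_subset_Icc ha hb)).preimage_isClosed_of_isClosed isClosed_Icc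
      isClosed_singleton) inter_subset_left
  obtain ⟨s, ⟨hs, hFs⟩, hlast⟩ := hK.exists_isGreatest ⟨a, ⟨le_rfl, hab⟩, hFa⟩
  rw [mem_preimage, mem_singleton_iff] at hFs
  have hsb : s < b := lt_of_le_of_ne hs.2 fun h => by rw [h] at hFs; linarith
  obtain ⟨k, hk⟩ := hF.exists_hasRightSlope ⟨ha.trans hs.1, hsb.trans_le hb⟩
  refine ⟨s, ⟨hs.1, hsb⟩, hFs, ?_⟩
  rw [hk.slopeR_eq]
  obtain ⟨ε, hε, hlin⟩ := hk
  set δ := min ε (b - s)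
  have hδ : 0 < δ := lt_min hε (by linarith)
  have hsδ : s + δ ∈ Icc a b := ⟨by linarith [hs.1], by linarith [min_le_right ε (b - s)]⟩
  have hlt : m < F (s + δ) := lt_of_le_of_ne (hge _ hsδ) fun h =>
    absurd (hlast ⟨hsδ, h.symm⟩) (by linarith)
  rw [hlin (s + δ) ⟨by linarith, by linarith [min_le_left ε (b - s)]⟩, hFs] at hlt
  exact_mod_cast pos_of_mul_pos_left (by linarith : (0 : ℝ) < k * δ) hδ.le

theorem PLInt.exists_slopeL_pos (hF : PLInt F L) (hb : 0 ≤ b) (hba : b ≤ a) (ha : a ≤ L)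
    (hFa : F a = m) (hge : ∀ r ∈ Icc b a, m ≤ F r) (hFb : m < F b) :
    ∃ s ∈ Ioc b a, F s = m ∧ 0 < slopeL F s := by
  have hK : IsCompact (Icc b a ∩ F ⁻¹' {m}) := isCompact_Icc.of_isClosed_subset
    ((hF.continuousOn.mono (Icc_subset_Icc hb ha)).preimage_isClosed_of_isClosed isClosed_Icc
      isClosed_singleton) inter_subset_left
  obtain ⟨s, ⟨hs, hFs⟩, hfirst⟩ := hK.exists_isLeast ⟨a, ⟨hba, le_rfl⟩, hFa⟩
  rw [mem_preimage, mem_singleton_iff] at hFs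
  have hbs : b < s := lt_of_le_of_ne hs.1 fun h => by rw [← h] at hFs; linarith
  obtain ⟨k, hk⟩ := hF.exists_hasLeftSlope ⟨hb.trans_lt hbs, hs.2.trans ha⟩
  refine ⟨s, ⟨hbs, hs.2⟩, hFs, ?_⟩
  rw [hk.slopeL_eq]
  obtain ⟨ε, hε, hlin⟩ := hk
  set δ := min ε (s - b)
  have hδ : 0 < δ := lt_min hε (by linarith)
  have hsδ : s - δ ∈ Icc b a := ⟨by linarith [min_le_right ε (s - b)], by linarith [hs.2]⟩
  have hlt : m < F (s - δ) := lt_of_le_of_ne (hge _ hsδ) fun h =>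
    absurd (hfirst ⟨hsδ, h.symm⟩) (by linarith)
  rw [hlin (s - δ) ⟨by linarith [min_le_left ε (s - b)], by linarith⟩, hFs] at hlt
  exact_mod_cast pos_of_mul_pos_left (by linarith : (0 : ℝ) < k * δ) hδ.le

end PiecewiseLinear

section Divisors

variable {Γ : MetricGraphModel}

theorem unitDiv_apply (p z : Γ.Pt) : unitDiv Γ p z = if z = p then 1 else 0 := rfl

theorem unitDiv_nonneg (p z : Γ.Pt) : 0 ≤ unitDiv Γ p z := by
  rw [unitDiv_apply]; split_ifs <;> norm_num

theorem sum_unitDiv (A : Finset Γ.Pt) (p : Γ.Pt) :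
    ∑ z ∈ A, unitDiv Γ p z = if p ∈ A then 1 else 0 :=
  Finset.sum_ite_eq' A p fun _ => 1

theorem mem_of_two_le_sum_unitDiv {A : Finset Γ.Pt} {p q : Γ.Pt}
    (h : 2 ≤ ∑ z ∈ A, (unitDiv Γ p z + unitDiv Γ q z)) : p ∈ A ∧ q ∈ A := by
  rw [Finset.sum_add_distrib, sum_unitDiv, sum_unitDiv] at h
  constructor <;> by_contra hA <;> simp only [hA, if_false] at h <;> split_ifs at h <;> omega

theorem unitDiv_finSupp (p : Γ.Pt) : DivFinSupp (unitDiv Γ p) :=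
  (Set.finite_singleton p).subset fun z hz => by
    by_contra h; exact hz (if_neg h)

theorem divDegree_unitDiv (p : Γ.Pt) : divDegree (unitDiv Γ p) = 1 := by
  rw [divDegree, finsum_eq_single (unitDiv Γ p) p fun z hz => if_neg hz]
  exact if_pos rfl

theorem divDegree_sub {D D' : Divisor Γ} (hD : DivFinSupp D) (hD' : DivFinSupp D') :
    divDegree (D - D') = divDegree D - divDegree D' :=
  finsum_sub_distrib hD hD'

variable (Γ) in
def degreeZero : AddSubgroup (Divisor Γ) where
  carrier := {D | DivFinSupp D ∧ divDegree D = 0}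
  add_mem' := by
    rintro D D' ⟨hD, hD₀⟩ ⟨hD', hD'₀⟩
    refine ⟨Function.HasFiniteSupport.add hD hD', ?_⟩
    change ∑ᶠ z, (D z + D' z) = 0
    rw [finsum_add_distrib hD hD']
    exact (congrArg₂ (· + ·) hD₀ hD'₀).trans (add_zero 0)
  zero_mem' := ⟨Function.hasFiniteSupport_zero, finsum_zero⟩
  neg_mem' := by
    rintro D ⟨hD, hD₀⟩
    refine ⟨Function.HasFiniteSupport.neg hD, ?_⟩
    change ∑ᶠ z, -D z = 0
    rw [finsum_neg_distrib]
    exact neg_eq_zero.2 hD₀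

theorem unitDiv_sub_unitDiv_mem (p q : Γ.Pt) : unitDiv Γ p - unitDiv Γ q ∈ degreeZero Γ :=
  ⟨Function.HasFiniteSupport.sub (unitDiv_finSupp p) (unitDiv_finSupp q), by
    rw [divDegree_sub (unitDiv_finSupp p) (unitDiv_finSupp q), divDegree_unitDiv,
      divDegree_unitDiv, sub_self]⟩

theorem exists_pos_of_divDegree_pos {B : Divisor Γ} (hB : DivEffective B)
    (hdeg : 0 < divDegree B) : ∃ p, 0 < B p := by
  by_contra! h
  have : B = 0 := funext fun p => le_antisymm (h p) (hB p)
  exact hdeg.ne' (by rw [divDegree, this]; exact finsum_zero)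

theorem exists_eq_unitDiv_add {B : Divisor Γ} (hB : DivEffective B) (hfin : DivFinSupp B)
    (hdeg : 0 < divDegree B) :
    ∃ p B', B = unitDiv Γ p + B' ∧ DivEffective B' ∧ DivFinSupp B' ∧
      divDegree B' = divDegree B - 1 := by
  obtain ⟨p, hp⟩ := exists_pos_of_divDegree_pos hB hdeg
  refine ⟨p, B - unitDiv Γ p, by abel, fun z => ?_,
    Function.HasFiniteSupport.sub hfin (unitDiv_finSupp p), ?_⟩
  · rw [Pi.sub_apply, unitDiv_apply]
    split_ifs with h
    · subst h; omega
    · simpa using hB z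
  · rw [divDegree_sub hfin (unitDiv_finSupp p), divDegree_unitDiv]

theorem exists_eq_unitDiv_add_unitDiv {B : Divisor Γ} (hB : DivEffective B)
    (hfin : DivFinSupp B) (hdeg : divDegree B = 2) :
    ∃ p q, B = unitDiv Γ p + unitDiv Γ q := by
  obtain ⟨p, B₁, rfl, hB₁, hfin₁, hdeg₁⟩ := exists_eq_unitDiv_add hB hfin (by omega)
  obtain ⟨q, B₂, rfl, hB₂, hfin₂, hdeg₂⟩ := exists_eq_unitDiv_add hB₁ hfin₁ (by omega)
  obtain rfl : B₂ = 0 := by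
    by_contra hne
    obtain ⟨z, hz⟩ := Function.ne_iff.1 hne
    have : 0 < divDegree B₂ := finsum_pos hB₂ ⟨z, lt_of_le_of_ne (hB₂ z) (Ne.symm hz)⟩ hfin₂
    omega
  exact ⟨p, q, by simp⟩

end Divisors

section EdgeDivisors

variable {Γ : MetricGraphModel}

theorem inr_eq_inr_iff {e e' : Γ.E} {r r' : ℝ} {hr : 0 < r ∧ r < Γ.len e}
    {hr' : 0 < r' ∧ r' < Γ.len e'} :
    (Sum.inr ⟨e, r, hr⟩ : Γ.Pt) = Sum.inr ⟨e', r', hr'⟩ ↔ e = e' ∧ r = r' := by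
  constructor
  · intro h
    simp only [Sum.inr.injEq, Sigma.mk.inj_iff] at h
    obtain ⟨rfl, h⟩ := h
    exact ⟨rfl, congrArg Subtype.val (eq_of_heq h)⟩
  · rintro ⟨rfl, rfl⟩; rfl

theorem not_sameEdgeInterior_inl_left (v : Γ.V) (q : Γ.Pt) :
    ¬SameEdgeInterior Γ (Sum.inl v) q := by
  rintro ⟨e, ⟨_, h⟩, -⟩; cases h

theorem not_sameEdgeInterior_inl_right (p : Γ.Pt) (v : Γ.V) :
    ¬SameEdgeInterior Γ p (Sum.inl v) := by
  rintro ⟨e, -, ⟨_, h⟩⟩; cases h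

variable (Γ) in
noncomputable def pointAt (e : Γ.E) (r : ℝ) : Γ.Pt :=
  if h : 0 < r ∧ r < Γ.len e then Sum.inr ⟨e, r, h⟩
  else if r ≤ 0 then Sum.inl (Γ.src e) else Sum.inl (Γ.tgt e)

variable {e : Γ.E} {r : ℝ}

theorem pointAt_zero (e : Γ.E) : pointAt Γ e 0 = Sum.inl (Γ.src e) := by
  simp [pointAt]

theorem pointAt_len (e : Γ.E) : pointAt Γ e (Γ.len e) = Sum.inl (Γ.tgt e) := by
  simp [pointAt, (Γ.len_pos e).not_ge]

theorem pointAt_of_mem_Ioo (h : 0 < r ∧ r < Γ.len e) : pointAt Γ e r = Sum.inr ⟨e, r, h⟩ :=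
  dif_pos h

theorem ratEval_pointAt (f : RationalFunction Γ) (hr : r ∈ Icc 0 (Γ.len e)) :
    ratEval f (pointAt Γ e r) = f.eFun e r := by
  rcases hr.1.eq_or_lt with rfl | h0
  · rw [pointAt_zero, ratEval, f.srcVal]
  rcases hr.2.eq_or_lt with rfl | hL
  · rw [pointAt_len, ratEval, f.tgtVal]
  · rw [pointAt_of_mem_Ioo ⟨h0, hL⟩, ratEval]

noncomputable def edgeDiv (e : Γ.E) (W : ℝ → ℝ) : Divisor Γ
  | Sum.inl v => (if Γ.src e = v then slopeR W 0 else 0) +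
      (if Γ.tgt e = v then slopeL W (Γ.len e) else 0)
  | Sum.inr q => if q.1 = e then slopeR W q.2.1 + slopeL W q.2.1 else 0

theorem ratDiv_eq_sum_edgeDiv (f : RationalFunction Γ) :
    ratDiv f = ∑ e, edgeDiv e (f.eFun e) := by
  funext z
  rcases z with v | ⟨e', r, hr⟩ <;> simp [ratDiv, edgeDiv, Finset.sum_apply]

theorem edgeDiv_eq_sum_of_eqOn {F : ℝ → ℝ} {ι : Type*} [Fintype ι] {c : ℝ} {k : ι → ℤ}
    {a : ι → ℝ} (hF : EqOn F (rampSum c k a) (Icc 0 (Γ.len e))) :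
    edgeDiv e F = ∑ i, k i • edgeDiv e (ramp (a i)) := by
  have hR : ∀ s ∈ Ico 0 (Γ.len e), slopeR F s = ∑ i, k i * slopeR (ramp (a i)) s :=
    fun s hs => by
      rw [((hasRightSlope_rampSum c k a s).congr (sub_pos.2 hs.2) fun r hr =>
        hF ⟨hs.1.trans hr.1, by linarith [hr.2]⟩).slopeR_eq]
      simp only [(hasRightSlope_ramp _ s).slopeR_eq]
  have hL : ∀ s ∈ Ioc 0 (Γ.len e), slopeL F s = ∑ i, k i * slopeL (ramp (a i)) s :=
    fun s hs => by
      rw [((hasLeftSlope_rampSum c k a s).congr hs.1 fun r hr =>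
        hF ⟨by linarith [hr.1], hr.2.trans hs.2⟩).slopeL_eq]
      simp only [(hasLeftSlope_ramp _ s).slopeL_eq]
  have hlen := Γ.len_pos e
  funext z
  rcases z with v | ⟨e', r, hr⟩
  · simp only [edgeDiv, Finset.sum_apply, Pi.smul_apply, smul_eq_mul,
      hR 0 ⟨le_rfl, hlen⟩, hL _ ⟨hlen, le_rfl⟩]
    split_ifs <;> simp only [add_zero, zero_add, mul_add, mul_zero, Finset.sum_add_distrib,
      Finset.sum_const_zero]
  · simp only [edgeDiv, Finset.sum_apply, Pi.smul_apply, smul_eq_mul]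
    split_ifs with h
    · subst h
      rw [hR r ⟨hr.1.le, hr.2⟩, hL r ⟨hr.1, hr.2.le⟩, ← Finset.sum_add_distrib]
      simp [mul_add]
    · simp

theorem edgeDiv_ramp {a : ℝ} (ha : a ∈ Icc 0 (Γ.len e)) :
    edgeDiv e (ramp a) = unitDiv Γ (pointAt Γ e a) - unitDiv Γ (Sum.inl (Γ.tgt e)) := by
  have hlen := Γ.len_pos e
  funext z
  simp only [edgeDiv, Pi.sub_apply, unitDiv_apply, (hasRightSlope_ramp a _).slopeR_eq,
    (hasLeftSlope_ramp a _).slopeL_eq]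
  rcases ha.1.eq_or_lt with rfl | h0
  · rcases z with v | ⟨e', r, hr⟩
    · simp only [pointAt_zero, le_refl, hlen, if_true, Sum.inl.injEq, @eq_comm _ v]
      split_ifs <;> rfl
    · simp [pointAt_zero, hr.1, hr.1.le]
  rcases ha.2.eq_or_lt with rfl | hL
  · rcases z with v | ⟨e', r, hr⟩
    · simp [pointAt_len, h0.not_ge]
    · simp only [pointAt_len, reduceCtorEq, if_false, sub_zero]
      by_cases he : e' = e
      · subst he; simp [hr.2.le, hr.2.not_ge]
      · simp [he]
  · rw [pointAt_of_mem_Ioo ⟨h0, hL⟩]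
    rcases z with v | ⟨e', r, hr⟩
    · simp only [h0.not_ge, hL, if_true, if_false, reduceCtorEq, Sum.inl.injEq, @eq_comm _ v]
      split_ifs <;> rfl
    · simp only [inr_eq_inr_iff, reduceCtorEq, if_false, sub_zero]
      by_cases he : e' = e
      · subst he
        rcases lt_trichotomy a r with h | rfl | h
        · simp [h, h.le, h.ne']
        · simp
        · simp [h.not_ge, h.not_gt, h.ne]
      · simp [he]

theorem edgeDiv_add {F G : ℝ → ℝ} (hF : PLInt F (Γ.len e)) (hG : PLInt G (Γ.len e)) :
    edgeDiv e (F + G) = edgeDiv e F + edgeDiv e G := by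
  obtain ⟨ι, _, c, k, a, -, hF⟩ := hF.isRampSumOn
  obtain ⟨κ, _, d, l, b, -, hG⟩ := hG.isRampSumOn
  have hFG : EqOn (F + G) (rampSum (c + d) (Sum.elim k l) (Sum.elim a b)) (Icc 0 (Γ.len e)) :=
    fun r hr => by rw [← rampSum_add_rampSum, Pi.add_apply, Pi.add_apply, hF hr, hG hr]
  rw [edgeDiv_eq_sum_of_eqOn hF, edgeDiv_eq_sum_of_eqOn hG, edgeDiv_eq_sum_of_eqOn hFG,
    Fintype.sum_sum_type]
  rfl

theorem edgeDiv_neg {F : ℝ → ℝ} (hF : PLInt F (Γ.len e)) : edgeDiv e (-F) = -edgeDiv e F := by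
  obtain ⟨ι, _, c, k, a, -, hF⟩ := hF.isRampSumOn
  have hF' : EqOn (-F) (rampSum (-c) (-k) a) (Icc 0 (Γ.len e)) :=
    fun r hr => by rw [← neg_rampSum, Pi.neg_apply, Pi.neg_apply, hF hr]
  rw [edgeDiv_eq_sum_of_eqOn hF, edgeDiv_eq_sum_of_eqOn hF', ← Finset.sum_neg_distrib]
  simp [neg_smul]

theorem edgeDiv_eq_zero_of_eqOn_const {F : ℝ → ℝ} {c : ℝ}
    (hF : EqOn F (fun _ => c) (Icc 0 (Γ.len e))) : edgeDiv e F = 0 := by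
  have : EqOn F (rampSum c (![] : Fin 0 → ℤ) ![]) (Icc 0 (Γ.len e)) := fun r hr => by
    simp [hF hr, rampSum]
  simp [edgeDiv_eq_sum_of_eqOn this]

theorem edgeDiv_mem_degreeZero {F : ℝ → ℝ} (hF : PLInt F (Γ.len e)) :
    edgeDiv e F ∈ degreeZero Γ := by
  obtain ⟨ι, _, c, k, a, ha, hF⟩ := hF.isRampSumOn
  rw [edgeDiv_eq_sum_of_eqOn hF]
  exact AddSubgroup.sum_mem _ fun i _ => AddSubgroup.zsmul_mem _
    (edgeDiv_ramp (ha i) ▸ unitDiv_sub_unitDiv_mem _ _) _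

end EdgeDivisors

section RationalFunctions

variable {Γ : MetricGraphModel}

namespace RationalFunction

noncomputable instance : Add (RationalFunction Γ) where
  add f g :=
    { vVal := f.vVal + g.vVal
      eFun := fun e => f.eFun e + g.eFun e
      pl := fun e => (f.pl e).add (g.pl e)
      srcVal := fun e => by simp [f.srcVal, g.srcVal]
      tgtVal := fun e => by simp [f.tgtVal, g.tgtVal] }

noncomputable instance : Neg (RationalFunction Γ) where
  neg f :=
    { vVal := -f.vVal
      eFun := fun e => -f.eFun e
      pl := fun e => (f.pl e).neg
      srcVal := fun e => by simp [f.srcVal]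
      tgtVal := fun e => by simp [f.tgtVal] }

noncomputable def onEdge (e : Γ.E) (W : ℝ → ℝ) (hW : PLInt W (Γ.len e)) (h0 : W 0 = 0)
    (hL : W (Γ.len e) = 0) : RationalFunction Γ where
  vVal := 0
  eFun e' := if e' = e then W else 0
  pl e' := by
    split_ifs with h
    · exact h ▸ hW
    · exact plInt_const 0 (Γ.len_pos e').le
  srcVal e' := by split_ifs with h <;> simp [h0]
  tgtVal e' := by
    split_ifs with h
    · subst h; simp [hL]
    · simp

variable (f g : RationalFunction Γ)

@[simp] theorem add_eFun (e : Γ.E) : (f + g).eFun e = f.eFun e + g.eFun e := rfl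

@[simp] theorem neg_eFun (e : Γ.E) : (-f).eFun e = -f.eFun e := rfl

theorem ratEval_neg (z : Γ.Pt) : ratEval (-f) z = -ratEval f z := by cases z <;> rfl

theorem ratDiv_add : ratDiv (f + g) = ratDiv f + ratDiv g := by
  simp only [ratDiv_eq_sum_edgeDiv, add_eFun, ← Finset.sum_add_distrib]
  exact Finset.sum_congr rfl fun e _ => edgeDiv_add (f.pl e) (g.pl e)

theorem ratDiv_neg : ratDiv (-f) = -ratDiv f := by
  simp only [ratDiv_eq_sum_edgeDiv, neg_eFun, ← Finset.sum_neg_distrib]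
  exact Finset.sum_congr rfl fun e _ => edgeDiv_neg (f.pl e)

theorem ratDiv_onEdge {e : Γ.E} {W : ℝ → ℝ} (hW : PLInt W (Γ.len e)) (h0 : W 0 = 0)
    (hL : W (Γ.len e) = 0) : ratDiv (onEdge e W hW h0 hL) = edgeDiv e W := by
  rw [ratDiv_eq_sum_edgeDiv, Finset.sum_eq_single e]
  · simp [onEdge]
  · intro e' _ he'
    simp only [onEdge, if_neg he']
    exact edgeDiv_eq_zero_of_eqOn_const (c := 0) fun _ _ => rfl
  · simp

theorem ratDiv_eq_zero_of_ratEval_eq {c : ℝ} (hc : ∀ z, ratEval f z = c) : ratDiv f = 0 := by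
  rw [ratDiv_eq_sum_edgeDiv]
  exact Finset.sum_eq_zero fun e _ => edgeDiv_eq_zero_of_eqOn_const (c := c) fun r hr => by
    rw [← ratEval_pointAt f hr, hc]

theorem ratDiv_mem_degreeZero : ratDiv f ∈ degreeZero Γ := by
  rw [ratDiv_eq_sum_edgeDiv]
  exact AddSubgroup.sum_mem _ fun e _ => edgeDiv_mem_degreeZero (f.pl e)

end RationalFunction

variable {D D' D'' : Divisor Γ}

theorem LinEquiv.symm (h : LinEquiv Γ D D') : LinEquiv Γ D' D := by
  obtain ⟨f, hf⟩ := h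
  refine ⟨-f, fun z => ?_⟩
  rw [RationalFunction.ratDiv_neg, Pi.neg_apply, hf z]; ring

theorem LinEquiv.trans (h : LinEquiv Γ D D') (h' : LinEquiv Γ D' D'') : LinEquiv Γ D D'' := by
  obtain ⟨f, hf⟩ := h
  obtain ⟨g, hg⟩ := h'
  refine ⟨g + f, fun z => ?_⟩
  rw [RationalFunction.ratDiv_add, Pi.add_apply, hf z, hg z]; ring

theorem LinEquiv.add_left (h : LinEquiv Γ D D') (C : Divisor Γ) :
    LinEquiv Γ (C + D) (C + D') := by
  obtain ⟨f, hf⟩ := h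
  exact ⟨f, fun z => by simp only [Pi.add_apply, hf z]; ring⟩

theorem LinEquiv.of_add_left {C : Divisor Γ} (h : LinEquiv Γ (C + D) (C + D')) :
    LinEquiv Γ D D' := by
  obtain ⟨f, hf⟩ := h
  exact ⟨f, fun z => by have := hf z; simp only [Pi.add_apply] at this; linarith⟩

/-- The witness is `ramp s + ramp t - ramp a - ramp d` on `e`, which vanishes at both ends of
`e` because `a + d = s + t`. -/
theorem linEquiv_pointAt {e : Γ.E} {s t a d : ℝ} (hs : s ∈ Icc 0 (Γ.len e))
    (ht : t ∈ Icc 0 (Γ.len e)) (ha : a ∈ Icc 0 (Γ.len e)) (hd : d ∈ Icc 0 (Γ.len e))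
    (hsum : a + d = s + t) :
    LinEquiv Γ (unitDiv Γ (pointAt Γ e s) + unitDiv Γ (pointAt Γ e t))
      (unitDiv Γ (pointAt Γ e a) + unitDiv Γ (pointAt Γ e d)) := by
  set W := rampSum 0 ![(1 : ℤ), 1, -1, -1] ![s, t, a, d]
  have hW : PLInt W (Γ.len e) := IsRampSumOn.plInt
    ⟨Fin 4, inferInstance, 0, _, _, by intro i; fin_cases i; exacts [hs, ht, ha, hd],
      fun _ _ => rfl⟩ (Γ.len_pos e).le
  have h0 : W 0 = 0 := by
    simp [W, rampSum, Fin.sum_univ_four, ramp_of_ge hs.1, ramp_of_ge ht.1, ramp_of_ge ha.1,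
      ramp_of_ge hd.1]
  have hL : W (Γ.len e) = 0 := by
    simp [W, rampSum, Fin.sum_univ_four, ramp_of_le hs.2, ramp_of_le ht.2, ramp_of_le ha.2,
      ramp_of_le hd.2]
    linarith
  refine ⟨RationalFunction.onEdge e W hW h0 hL, fun z => ?_⟩
  rw [RationalFunction.ratDiv_onEdge, edgeDiv_eq_sum_of_eqOn (fun _ _ => rfl)]
  simp only [Fin.sum_univ_four, Matrix.cons_val, edgeDiv_ramp hs, edgeDiv_ramp ht,
    edgeDiv_ramp ha, edgeDiv_ramp hd, Pi.add_apply, Pi.sub_apply, Pi.smul_apply, smul_eq_mul]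
  ring

theorem exists_linEquiv_not_sameEdgeInterior {e : Γ.E} {s t : ℝ} (hs : 0 < s ∧ s < Γ.len e)
    (ht : 0 < t ∧ t < Γ.len e) :
    ∃ p q : Γ.Pt, ¬SameEdgeInterior Γ p q ∧ LinEquiv Γ
      (unitDiv Γ (Sum.inr ⟨e, s, hs⟩) + unitDiv Γ (Sum.inr ⟨e, t, ht⟩))
      (unitDiv Γ p + unitDiv Γ q) := by
  set δ := min s (Γ.len e - t)
  have hδs : δ ≤ s := min_le_left _ _
  have hδt : δ ≤ Γ.len e - t := min_le_right _ _
  have hδ : 0 ≤ δ := le_min hs.1.le (by linarith)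
  refine ⟨pointAt Γ e (s - δ), pointAt Γ e (t + δ), ?_, ?_⟩
  · rcases min_choice s (Γ.len e - t) with h | h
    · rw [show s - δ = 0 by simp only [δ, h, sub_self], pointAt_zero]
      exact not_sameEdgeInterior_inl_left _ _
    · rw [show t + δ = Γ.len e by simp only [δ, h]; ring, pointAt_len]
      exact not_sameEdgeInterior_inl_right _ _
  · rw [← pointAt_of_mem_Ioo hs, ← pointAt_of_mem_Ioo ht]
    exact linEquiv_pointAt ⟨hs.1.le, hs.2.le⟩ ⟨ht.1.le, ht.2.le⟩ ⟨by linarith, by linarith⟩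
      ⟨by linarith, by linarith⟩ (by ring)

end RationalFunctions

section Minimum

variable {Γ : MetricGraphModel} (f : RationalFunction Γ)

theorem RationalFunction.exists_forall_le [Nonempty Γ.V] :
    ∃ z₀, ∀ z, ratEval f z₀ ≤ ratEval f z := by
  have hedge : ∀ e, ∃ s ∈ Icc 0 (Γ.len e), IsMinOn (f.eFun e) (Icc 0 (Γ.len e)) s := fun e =>
    isCompact_Icc.exists_isMinOn (nonempty_Icc.2 (Γ.len_pos e).le) (f.pl e).continuousOn
  choose s hs hsmin using hedge
  set g : Γ.V ⊕ Γ.E → ℝ := Sum.elim f.vVal fun e => f.eFun e (s e)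
  have hg : ∀ z, ∃ i, g i ≤ ratEval f z := by
    rintro (v | ⟨e, r, hr⟩)
    · exact ⟨Sum.inl v, le_rfl⟩
    · exact ⟨Sum.inr e, hsmin e ⟨hr.1.le, hr.2.le⟩⟩
  obtain ⟨i, hi⟩ := Finite.exists_min g
  have hi' : ∀ z, g i ≤ ratEval f z := fun z => (hg z).elim fun j hj => (hi j).trans hj
  rcases i with v | e
  · exact ⟨Sum.inl v, hi'⟩
  · exact ⟨pointAt Γ e (s e), by rw [ratEval_pointAt f (hs e)]; exact hi'⟩

variable {f} {m : ℝ} (hmin : ∀ z, m ≤ ratEval f z)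
include hmin

theorem RationalFunction.le_eFun {e : Γ.E} {r : ℝ} (hr : r ∈ Icc 0 (Γ.len e)) :
    m ≤ f.eFun e r :=
  ratEval_pointAt f hr ▸ hmin _

theorem RationalFunction.slopeR_nonneg_of_min {e : Γ.E} {s : ℝ} (hs : s ∈ Ico 0 (Γ.len e))
    (hfs : f.eFun e s = m) : 0 ≤ slopeR (f.eFun e) s := by
  obtain ⟨k, hk⟩ := (f.pl e).exists_hasRightSlope hs
  rw [hk.slopeR_eq]
  exact hk.nonneg hs.2 fun r hr => hfs ▸ f.le_eFun hmin ⟨hs.1.trans hr.1, hr.2⟩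

theorem RationalFunction.slopeL_nonneg_of_min {e : Γ.E} {s : ℝ} (hs : s ∈ Ioc 0 (Γ.len e))
    (hfs : f.eFun e s = m) : 0 ≤ slopeL (f.eFun e) s := by
  obtain ⟨k, hk⟩ := (f.pl e).exists_hasLeftSlope hs
  rw [hk.slopeL_eq]
  exact hk.nonneg hs.1 fun r hr => hfs ▸ f.le_eFun hmin ⟨hr.1, hr.2.trans hs.2⟩

theorem RationalFunction.edgeDiv_nonneg_of_min {e : Γ.E} {z : Γ.Pt} (hz : ratEval f z = m) :
    0 ≤ edgeDiv e (f.eFun e) z := by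
  have hlen := Γ.len_pos e
  rcases z with v | ⟨e', r, hr⟩
  · have h₁ : Γ.src e = v → 0 ≤ slopeR (f.eFun e) 0 := fun h =>
      f.slopeR_nonneg_of_min hmin ⟨le_rfl, hlen⟩ (by rw [f.srcVal, h]; exact hz)
    have h₂ : Γ.tgt e = v → 0 ≤ slopeL (f.eFun e) (Γ.len e) := fun h =>
      f.slopeL_nonneg_of_min hmin ⟨hlen, le_rfl⟩ (by rw [f.tgtVal, h]; exact hz)
    simp only [edgeDiv]
    split_ifs with hs ht ht
    · exact add_nonneg (h₁ hs) (h₂ ht)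
    · simpa using h₁ hs
    · simpa using h₂ ht
    · exact le_rfl
  · simp only [edgeDiv]
    split_ifs with he
    · subst he
      exact add_nonneg (f.slopeR_nonneg_of_min hmin ⟨hr.1.le, hr.2⟩ hz)
        (f.slopeL_nonneg_of_min hmin ⟨hr.1, hr.2.le⟩ hz)
    · exact le_rfl

end Minimum

section Leaving

variable {Γ : MetricGraphModel}

def LeavesLevelAt (f : RationalFunction Γ) (m : ℝ) (e : Γ.E) (s : ℝ) : Prop :=
  f.eFun e s = m ∧ ((s ∈ Ico 0 (Γ.len e) ∧ 0 < slopeR (f.eFun e) s) ∨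
    (s ∈ Ioc 0 (Γ.len e) ∧ 0 < slopeL (f.eFun e) s))

theorem LeavesLevelAt.mem_Icc {f : RationalFunction Γ} {m : ℝ} {e : Γ.E} {s : ℝ}
    (h : LeavesLevelAt f m e s) : s ∈ Icc 0 (Γ.len e) := by
  rcases h.2 with ⟨hs, -⟩ | ⟨hs, -⟩
  exacts [Ico_subset_Icc_self hs, Ioc_subset_Icc_self hs]

variable {f : RationalFunction Γ} {m : ℝ} (hmin : ∀ z, m ≤ ratEval f z)
include hmin

theorem LeavesLevelAt.one_le_edgeDiv {e : Γ.E} {s : ℝ} (h : LeavesLevelAt f m e s) :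
    1 ≤ edgeDiv e (f.eFun e) (pointAt Γ e s) := by
  have hlen := Γ.len_pos e
  obtain ⟨hfs, ⟨hs, hR⟩ | ⟨hs, hL⟩⟩ := h
  · rcases hs.1.eq_or_lt with rfl | h0
    · have : Γ.tgt e = Γ.src e → 0 ≤ slopeL (f.eFun e) (Γ.len e) := fun ht =>
        f.slopeL_nonneg_of_min hmin ⟨hlen, le_rfl⟩ (by rw [f.tgtVal, ht, ← f.srcVal, hfs])
      simp only [pointAt_zero, edgeDiv, if_true]
      split_ifs with ht
      · linarith [this ht]
      · linarith
    · have := f.slopeL_nonneg_of_min hmin ⟨h0, hs.2.le⟩ hfs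
      simp only [pointAt_of_mem_Ioo ⟨h0, hs.2⟩, edgeDiv, if_true]
      linarith
  · rcases hs.2.eq_or_lt with rfl | hlt
    · have : Γ.src e = Γ.tgt e → 0 ≤ slopeR (f.eFun e) 0 := fun ht =>
        f.slopeR_nonneg_of_min hmin ⟨le_rfl, hlen⟩ (by rw [f.srcVal, ht, ← f.tgtVal, hfs])
      simp only [pointAt_len, edgeDiv, if_true]
      split_ifs with ht
      · linarith [this ht]
      · linarith
    · have := f.slopeR_nonneg_of_min hmin ⟨hs.1.le, hlt⟩ hfs
      simp only [pointAt_of_mem_Ioo ⟨hs.1, hlt⟩, edgeDiv, if_true]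
      linarith

theorem card_le_ratDiv {z : Γ.Pt} (hz : ratEval f z = m) {T : Finset Γ.E} {s : Γ.E → ℝ}
    (hT : ∀ e ∈ T, LeavesLevelAt f m e (s e) ∧ pointAt Γ e (s e) = z) :
    (T.card : ℤ) ≤ ratDiv f z := by
  rw [ratDiv_eq_sum_edgeDiv, Finset.sum_apply]
  calc (T.card : ℤ) = ∑ _e ∈ T, 1 := by simp
    _ ≤ ∑ e ∈ T, edgeDiv e (f.eFun e) z := Finset.sum_le_sum fun e he =>
        (hT e he).2 ▸ (hT e he).1.one_le_edgeDiv hmin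
    _ ≤ ∑ e, edgeDiv e (f.eFun e) z := Finset.sum_le_sum_of_subset_of_nonneg
        (Finset.subset_univ T) fun e _ _ => f.edgeDiv_nonneg_of_min hmin hz

theorem card_leavingEdges_le_two {p q : Γ.Pt}
    (hle : ∀ z, ratDiv f z ≤ unitDiv Γ p z + unitDiv Γ q z) :
    (Finset.univ.filter fun e => ∃ s, LeavesLevelAt f m e s).card ≤ 2 := by
  set S := Finset.univ.filter fun e => ∃ s, LeavesLevelAt f m e s
  have : ∀ e ∈ S, ∃ s, LeavesLevelAt f m e s := fun e he => (Finset.mem_filter.1 he).2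
  choose! s hs using this
  set z := fun e => pointAt Γ e (s e)
  have hfiber : ∀ y ∈ S.image z,
      (((S.filter (z · = y)).card : ℕ) : ℤ) ≤ unitDiv Γ p y + unitDiv Γ q y := by
    intro y hy
    obtain ⟨e, he, rfl⟩ := Finset.mem_image.1 hy
    refine (card_le_ratDiv hmin (s := s) ?_ fun e' he' => ?_).trans (hle _)
    · rw [ratEval_pointAt f (hs e he).mem_Icc]; exact (hs e he).1
    · obtain ⟨he'S, hze'⟩ := Finset.mem_filter.1 he'
      exact ⟨hs e' he'S, hze'⟩
  have : (S.card : ℤ) ≤ 2 := by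
    rw [Finset.card_eq_sum_card_image z S]
    push_cast
    calc _ ≤ ∑ y ∈ S.image z, (unitDiv Γ p y + unitDiv Γ q y) := Finset.sum_le_sum hfiber
      _ ≤ 2 := by
        rw [Finset.sum_add_distrib, sum_unitDiv, sum_unitDiv]; split_ifs <;> norm_num
  exact_mod_cast this

theorem vVal_src_eq_iff_vVal_tgt_eq {e : Γ.E} (he : ∀ s, ¬LeavesLevelAt f m e s) :
    f.vVal (Γ.src e) = m ↔ f.vVal (Γ.tgt e) = m := by
  have hlen := Γ.len_pos e
  constructor
  · intro h0
    by_contra hne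
    obtain ⟨s, hs, hfs, hpos⟩ := (f.pl e).exists_slopeR_pos le_rfl hlen.le le_rfl
      (by rw [f.srcVal, h0]) (fun r hr => f.le_eFun hmin hr)
      (by rw [f.tgtVal]; exact lt_of_le_of_ne (hmin (Sum.inl _)) (Ne.symm hne))
    exact he s ⟨hfs, Or.inl ⟨hs, hpos⟩⟩
  · intro hL
    by_contra hne
    obtain ⟨s, hs, hfs, hpos⟩ := (f.pl e).exists_slopeL_pos le_rfl hlen.le le_rfl
      (by rw [f.tgtVal, hL]) (fun r hr => f.le_eFun hmin hr)
      (by rw [f.srcVal]; exact lt_of_le_of_ne (hmin (Sum.inl _)) (Ne.symm hne))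
    exact he s ⟨hfs, Or.inr ⟨hs, hpos⟩⟩

end Leaving

theorem IsWalk.preserves {Γ : MetricGraphModel} {P : Γ.V → Prop} {S : Finset Γ.E}
    (hP : ∀ e ∉ S, (P (Γ.src e) ↔ P (Γ.tgt e))) {L : List (Γ.E × Bool)} {u v : Γ.V}
    (hw : IsWalk Γ L u v) (hS : ∀ x ∈ L, x.1 ∉ S) (hu : P u) : P v := by
  induction L generalizing u with
  | nil => exact (show u = v from hw) ▸ hu
  | cons x L ih =>
    obtain ⟨hx, hw⟩ := hw
    refine ih hw (fun y hy => hS y (List.mem_cons_of_mem _ hy)) ?_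
    have := hP x.1 (hS x List.mem_cons_self)
    subst hx
    rcases x with ⟨e, _ | _⟩ <;> simp_all [dSrc, dTgt]

section Rigidity

variable {Γ : MetricGraphModel} {f : RationalFunction Γ} {p q : Γ.Pt}

theorem ThreeEdgeConnected.vVal_eq_of_vVal_eq (h3 : Γ.ThreeEdgeConnected) {m : ℝ}
    (hmin : ∀ z, m ≤ ratEval f z) (hle : ∀ z, ratDiv f z ≤ unitDiv Γ p z + unitDiv Γ q z)
    {u : Γ.V} (hu : f.vVal u = m) (v : Γ.V) : f.vVal v = m := by
  obtain ⟨L, hw, hS⟩ := h3 _ (card_leavingEdges_le_two hmin hle) u v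
  exact hw.preserves (P := fun w => f.vVal w = m) (fun e he => vVal_src_eq_iff_vVal_tgt_eq hmin
    fun s hs => he (Finset.mem_filter.2 ⟨Finset.mem_univ _, s, hs⟩)) hS hu

theorem two_le_sum_ratDiv {m : ℝ} (hmin : ∀ z, m ≤ ratEval f z) {e : Γ.E} {σ₁ σ₂ : ℝ}
    (h₁ : 0 < σ₁ ∧ σ₁ < Γ.len e) (h₂ : 0 < σ₂ ∧ σ₂ < Γ.len e) (hf₁ : f.eFun e σ₁ = m)
    (hf₂ : f.eFun e σ₂ = m) (hL : 0 < slopeL (f.eFun e) σ₁) (hR : 0 < slopeR (f.eFun e) σ₂) :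
    2 ≤ ∑ z ∈ {Sum.inr ⟨e, σ₁, h₁⟩, Sum.inr ⟨e, σ₂, h₂⟩}, ratDiv f z := by
  have hR₁ := f.slopeR_nonneg_of_min hmin ⟨h₁.1.le, h₁.2⟩ hf₁
  have hL₂ := f.slopeL_nonneg_of_min hmin ⟨h₂.1, h₂.2.le⟩ hf₂
  by_cases hσ : σ₁ = σ₂
  · subst hσ
    rw [Finset.pair_eq_singleton, Finset.sum_singleton]
    change 2 ≤ slopeR (f.eFun e) σ₁ + slopeL (f.eFun e) σ₁
    omega
  · rw [Finset.sum_pair fun h => hσ (inr_eq_inr_iff.1 h).2]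
    change 2 ≤ slopeR (f.eFun e) σ₁ + slopeL (f.eFun e) σ₁ +
      (slopeR (f.eFun e) σ₂ + slopeL (f.eFun e) σ₂)
    omega

/-- A minimum attained only inside an edge is left on both sides within that edge, which puts
two points of `div f`, hence both `p` and `q`, inside that edge. -/
theorem sameEdgeInterior_of_lt_vVal {z₀ : Γ.Pt} (hz₀ : ∀ z, ratEval f z₀ ≤ ratEval f z)
    (hvert : ∀ v, ratEval f z₀ < f.vVal v)
    (hle : ∀ z, ratDiv f z ≤ unitDiv Γ p z + unitDiv Γ q z) : SameEdgeInterior Γ p q := by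
  rcases z₀ with v | ⟨e, s₀, hs₀⟩
  · exact absurd (hvert v) (lt_irrefl _)
  have hmin : ∀ z, f.eFun e s₀ ≤ ratEval f z := hz₀
  obtain ⟨σ₂, hσ₂, hf₂, hR⟩ := (f.pl e).exists_slopeR_pos hs₀.1.le hs₀.2.le le_rfl rfl
    (fun r hr => f.le_eFun hmin ⟨hs₀.1.le.trans hr.1, hr.2⟩) (by rw [f.tgtVal]; exact hvert _)
  obtain ⟨σ₁, hσ₁, hf₁, hL⟩ := (f.pl e).exists_slopeL_pos le_rfl hs₀.1.le hs₀.2.le rfl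
    (fun r hr => f.le_eFun hmin ⟨hr.1, hr.2.trans hs₀.2.le⟩) (by rw [f.srcVal]; exact hvert _)
  have h₁ : 0 < σ₁ ∧ σ₁ < Γ.len e := ⟨hσ₁.1, hσ₁.2.trans_lt hs₀.2⟩
  have h₂ : 0 < σ₂ ∧ σ₂ < Γ.len e := ⟨hs₀.1.trans_le hσ₂.1, hσ₂.2⟩
  obtain ⟨hp, hq⟩ := mem_of_two_le_sum_unitDiv
    ((two_le_sum_ratDiv hmin h₁ h₂ hf₁ hf₂ hL hR).trans (Finset.sum_le_sum fun z _ => hle z))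
  have hint : ∀ z ∈ ({Sum.inr ⟨e, σ₁, h₁⟩, Sum.inr ⟨e, σ₂, h₂⟩} : Finset Γ.Pt),
      interiorOf Γ e z := by
    simp only [Finset.mem_insert, Finset.mem_singleton]
    rintro z (rfl | rfl)
    exacts [⟨_, rfl⟩, ⟨_, rfl⟩]
  exact ⟨e, hint p hp, hint q hq⟩

theorem ThreeEdgeConnected.vVal_eq_min (h3 : Γ.ThreeEdgeConnected)
    (hpq : ¬SameEdgeInterior Γ p q) (hle : ∀ z, ratDiv f z ≤ unitDiv Γ p z + unitDiv Γ q z)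
    {z₀ : Γ.Pt} (hz₀ : ∀ z, ratEval f z₀ ≤ ratEval f z) (v : Γ.V) :
    f.vVal v = ratEval f z₀ := by
  by_cases hu : ∃ u, f.vVal u = ratEval f z₀
  · obtain ⟨u, hu⟩ := hu
    exact h3.vVal_eq_of_vVal_eq hz₀ hle hu v
  · exact absurd (sameEdgeInterior_of_lt_vVal hz₀
      (fun u => lt_of_le_of_ne (hz₀ (Sum.inl u)) fun h => hu ⟨u, h.symm⟩) hle) hpq

theorem ThreeEdgeConnected.eq_of_linEquiv [Nonempty Γ.V] (h3 : Γ.ThreeEdgeConnected)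
    {p' q' : Γ.Pt} (hpq : ¬SameEdgeInterior Γ p q) (hpq' : ¬SameEdgeInterior Γ p' q')
    (h : LinEquiv Γ (unitDiv Γ p + unitDiv Γ q) (unitDiv Γ p' + unitDiv Γ q')) :
    unitDiv Γ p + unitDiv Γ q = unitDiv Γ p' + unitDiv Γ q' := by
  obtain ⟨f, hf⟩ := h
  have hle : ∀ z, ratDiv f z ≤ unitDiv Γ p z + unitDiv Γ q z := fun z => by
    have := hf z; simp only [Pi.add_apply] at this
    linarith [unitDiv_nonneg p' z, unitDiv_nonneg q' z]
  have hle' : ∀ z, ratDiv (-f) z ≤ unitDiv Γ p' z + unitDiv Γ q' z := fun z => by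
    have := hf z; simp only [Pi.add_apply] at this
    rw [RationalFunction.ratDiv_neg, Pi.neg_apply]
    linarith [unitDiv_nonneg p z, unitDiv_nonneg q z]
  obtain ⟨z₀, hz₀⟩ := f.exists_forall_le
  obtain ⟨z₁, hz₁⟩ := (-f).exists_forall_le
  obtain ⟨v⟩ := ‹Nonempty Γ.V›
  have h₀ := h3.vVal_eq_min hpq hle hz₀ v
  have h₁ := h3.vVal_eq_min hpq' hle' hz₁ v
  simp only [RationalFunction.ratEval_neg] at hz₁ h₁
  have hconst : ∀ z, ratEval f z = ratEval f z₀ := fun z =>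
    le_antisymm (by have := hz₁ z; change -f.vVal v = _ at h₁; linarith) (hz₀ z)
  funext z
  simpa [f.ratDiv_eq_zero_of_ratEval_eq hconst] using hf z

end Rigidity

section Admissible

variable {Γ : MetricGraphModel} {D : Divisor Γ}

theorem exists_admissibleRep (hfin : DivFinSupp D) (hdeg : divDegree D = 3)
    (hrk : RankGE Γ D 1) (x : Γ.V) : ∃ Dx, AdmissibleRep Γ D x Dx := by
  obtain ⟨B, hB, hBfin, hDB⟩ := hrk (unitDiv Γ (Sum.inl x)) (fun z => unitDiv_nonneg _ z)
    (unitDiv_finSupp _) (divDegree_unitDiv _)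
  have hBdeg : divDegree B = 2 := by
    obtain ⟨f, hf⟩ := hDB
    have hB : B = (D - unitDiv Γ (Sum.inl x)) - ratDiv f := funext fun z => by
      simp only [Pi.sub_apply]; linarith [hf z]
    have hfin' := Function.HasFiniteSupport.sub hfin (unitDiv_finSupp (Sum.inl x))
    rw [hB, divDegree_sub hfin' (f.ratDiv_mem_degreeZero).1, (f.ratDiv_mem_degreeZero).2,
      divDegree_sub hfin (unitDiv_finSupp _), hdeg, divDegree_unitDiv]
    norm_num
  obtain ⟨p, q, rfl⟩ := exists_eq_unitDiv_add_unitDiv hB hBfin hBdeg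
  have hD : LinEquiv Γ D (unitDiv Γ (Sum.inl x) + (unitDiv Γ p + unitDiv Γ q)) := by
    obtain ⟨f, hf⟩ := hDB
    exact ⟨f, fun z => by have := hf z; simp only [Pi.add_apply] at this ⊢; linarith⟩
  by_cases hpq : SameEdgeInterior Γ p q
  · obtain ⟨e, ⟨⟨s, hs⟩, rfl⟩, ⟨⟨t, ht⟩, rfl⟩⟩ := hpq
    obtain ⟨p', q', hpq', h⟩ := exists_linEquiv_not_sameEdgeInterior hs ht
    have hD' := hD.trans (h.add_left _)
    rw [← add_assoc] at hD'
    exact ⟨_, hD', p', q', rfl, hpq'⟩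
  · rw [← add_assoc] at hD
    exact ⟨_, hD, p, q, rfl, hpq⟩

theorem AdmissibleRep.apply_self_ne_zero {x : Γ.V} {Dx : Divisor Γ}
    (h : AdmissibleRep Γ D x Dx) : Dx (Sum.inl x) ≠ 0 := by
  obtain ⟨-, p, q, rfl, -⟩ := h
  have := unitDiv_nonneg p (Sum.inl x)
  have := unitDiv_nonneg q (Sum.inl x)
  simp only [unitDiv_apply, if_true] at *
  omega

theorem AdmissibleRep.exists_eq_unitDiv_add {x : Γ.V} {Dx : Divisor Γ}
    (h : AdmissibleRep Γ D x Dx) {z : Γ.Pt} (hz : Dx z ≠ 0) :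
    ∃ r₁ r₂, ¬SameEdgeInterior Γ r₁ r₂ ∧ Dx = unitDiv Γ z + (unitDiv Γ r₁ + unitDiv Γ r₂) := by
  obtain ⟨-, p, q, rfl, hpq⟩ := h
  have : z = Sum.inl x ∨ z = p ∨ z = q := by
    by_contra! h
    simp [unitDiv_apply, h.1, h.2.1, h.2.2] at hz
  rcases this with rfl | rfl | rfl
  · exact ⟨p, q, hpq, by funext; simp only [Pi.add_apply]; ring⟩
  · exact ⟨Sum.inl x, q, not_sameEdgeInterior_inl_left _ _, by
      funext; simp only [Pi.add_apply]; ring⟩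
  · exact ⟨Sum.inl x, p, not_sameEdgeInterior_inl_left _ _, by
      funext; simp only [Pi.add_apply]; ring⟩

theorem AdmissibleRep.eq_of_apply_ne_zero [Nonempty Γ.V] (h3 : Γ.ThreeEdgeConnected)
    {x y : Γ.V} {Dx Dy : Divisor Γ} (hx : AdmissibleRep Γ D x Dx) (hy : AdmissibleRep Γ D y Dy)
    {z : Γ.Pt} (hzx : Dx z ≠ 0) (hzy : Dy z ≠ 0) : Dx = Dy := by
  obtain ⟨r₁, r₂, hr, rfl⟩ := hx.exists_eq_unitDiv_add hzx
  obtain ⟨r₁', r₂', hr', rfl⟩ := hy.exists_eq_unitDiv_add hzy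
  rw [h3.eq_of_linEquiv hr hr' (hx.1.symm.trans hy.1).of_add_left]

end Admissible

end MetricGraphModel

theorem admissible_representatives_unique_general
    (Γ : MetricGraphModel) (h3ec : Γ.ThreeEdgeConnected)
    (D : MetricGraphModel.Divisor Γ) (hfin : MetricGraphModel.DivFinSupp D)
    (hdeg : MetricGraphModel.divDegree D = 3) (hrk : MetricGraphModel.RankGE Γ D 1) :
    (∀ x : Γ.V, ∃! Dx : MetricGraphModel.Divisor Γ, AdmissibleRep Γ D x Dx) ∧
    (∀ (x y : Γ.V) (Dx Dy : MetricGraphModel.Divisor Γ),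
      AdmissibleRep Γ D x Dx → AdmissibleRep Γ D y Dy → Dx ≠ Dy →
        Disjoint (Function.support Dx) (Function.support Dy)) := by
  refine ⟨fun x => ?_, fun x y Dx Dy hx hy hne => ?_⟩
  · have : Nonempty Γ.V := ⟨x⟩
    obtain ⟨Dx, hDx⟩ := exists_admissibleRep hfin hdeg hrk x
    exact ⟨Dx, hDx, fun Dy hDy => hDy.eq_of_apply_ne_zero h3ec hDx hDy.apply_self_ne_zero
      hDx.apply_self_ne_zero⟩
  · have : Nonempty Γ.V := ⟨x⟩
    exact Set.disjoint_left.2 fun z hzx hzy => hne (hx.eq_of_apply_ne_zero h3ec hy hzx hzy)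

/-- On a `3`-edge connected metric graph, every divisor `D`
of degree `3` and rank at least `1` has a unique admissible representative
with respect to each vertex of the canonical model, and any two distinct
admissible representatives of `D` have disjoint supports. -/
theorem admissible_representatives_unique
    (Γ : MetricGraphModel) (hcan : Γ.IsCanonical) (h3ec : Γ.ThreeEdgeConnected)
    (D : MetricGraphModel.Divisor Γ) (hfin : MetricGraphModel.DivFinSupp D)
    (hdeg : MetricGraphModel.divDegree D = 3) (hrk : MetricGraphModel.RankGE Γ D 1) :
    (∀ x : Γ.V, ∃! Dx : MetricGraphModel.Divisor Γ, AdmissibleRep Γ D x Dx) ∧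
    (∀ (x y : Γ.V) (Dx Dy : MetricGraphModel.Divisor Γ),
      AdmissibleRep Γ D x Dx → AdmissibleRep Γ D y Dy → Dx ≠ Dy →
        Disjoint (Function.support Dx) (Function.support Dy)) :=
  admissible_representatives_unique_general Γ h3ec D hfin hdeg hrk
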